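/- arXiv:1411.7341 — 5 statements merged into one kernel-verified Lean document; each statement's English description precedes it below -/
import Mathlib

section
/- Let A ∈ F[x_1,…,x_n] be a polynomial of individual degree at most d such that for every k with 1 ≤ k ≤ n, writing y_k = (x_1,…,x_k), the F-linear span of the coefficient polynomials {A_{(y_k,a)} : a ∈ {0,1,…,d}^k} has dimension at most w. Then A is computed by an ROABP of width w in the variable order (x_1,…,x_n); that is, there exist matrices D_1 ∈ F[x_1]^{1×w}, D_i ∈ F[x_i]^{w×w} for 2 ≤ i ≤ n−1, and D_n ∈ F[x_n]^{w×1} such that A = D_1·D_2⋯D_n. -/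
open MvPolynomial Matrix

noncomputable section

variable {F : Type*} [Field F]

/-- `p` only involves the variable `i` (it is a univariate polynomial in `x_i`). -/
def UnivariateIn {n : ℕ} (i : Fin n) (p : MvPolynomial (Fin n) F) : Prop :=
  ∀ m ∈ p.support, ∀ j : Fin n, j ≠ i → m j = 0

/-- The ordered product `D 0 * D 1 * ⋯ * D (n-1)` of the layer matrices of a branching program. -/
def layerProd {n w : ℕ} (D : Fin n → Matrix (Fin w) (Fin w) (MvPolynomial (Fin n) F)) :
    Matrix (Fin w) (Fin w) (MvPolynomial (Fin n) F) :=
  ((List.finRange n).map D).prod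

/-- The ordered product of the first `k` layer matrices. -/
def prefixProd {n w : ℕ} (k : ℕ)
    (D : Fin n → Matrix (Fin w) (Fin w) (MvPolynomial (Fin n) F)) :
    Matrix (Fin w) (Fin w) (MvPolynomial (Fin n) F) :=
  (((List.finRange n).take k).map D).prod

/-- `A` is computed by a read-once oblivious ABP of width `w` in variable order
`(x_{π 0}, …, x_{π (n-1)})`: `A = D₁ ⋯ Dₙ` where the entries of the `i`-th layer are
univariate polynomials in `x_{π i}`; the `1 × w` first layer and the `w × 1` last layer are
encoded by the constant selection vectors `u` and `v`. -/
def IsROABP {n : ℕ} (w : ℕ) (π : Equiv.Perm (Fin n)) (A : MvPolynomial (Fin n) F) : Prop :=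
  ∃ (u : Matrix (Fin 1) (Fin w) F) (D : Fin n → Matrix (Fin w) (Fin w) (MvPolynomial (Fin n) F))
    (v : Matrix (Fin w) (Fin 1) F),
    (∀ i r c, UnivariateIn (π i) (D i r c)) ∧
      A = (u.map (MvPolynomial.C (σ := Fin n)) * layerProd D * v.map (MvPolynomial.C (σ := Fin n)) :
        Matrix (Fin 1) (Fin 1) (MvPolynomial (Fin n) F)) 0 0

/-- The vector polynomial `P ∈ F[x]^{1×w}` is computed by an ROABP of width `w`
in variable order `π`. -/
def IsVecROABP {n : ℕ} (w : ℕ) (π : Equiv.Perm (Fin n))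
    (P : Fin w → MvPolynomial (Fin n) F) : Prop :=
  ∃ (u : Matrix (Fin 1) (Fin w) F) (D : Fin n → Matrix (Fin w) (Fin w) (MvPolynomial (Fin n) F)),
    (∀ i r c, UnivariateIn (π i) (D i r c)) ∧
      ∀ j, P j = (u.map (MvPolynomial.C) * layerProd D :
        Matrix (Fin 1) (Fin w) (MvPolynomial (Fin n) F)) 0 j

/-- The matrix polynomial `A ∈ F^{w×w}[x]` is computed by an ROABP of width `w`
in variable order `π`. -/
def IsMatROABP {n : ℕ} (w : ℕ) (π : Equiv.Perm (Fin n))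
    (A : Matrix (Fin w) (Fin w) (MvPolynomial (Fin n) F)) : Prop :=
  ∃ D : Fin n → Matrix (Fin w) (Fin w) (MvPolynomial (Fin n) F),
    (∀ i r c, UnivariateIn (π i) (D i r c)) ∧ A = layerProd D

/-- `A` has individual degree at most `d` in every variable. -/
def IndivDegLE {n : ℕ} (d : ℕ) (A : MvPolynomial (Fin n) F) : Prop :=
  ∀ m ∈ A.support, ∀ i, m i ≤ d

/-- The set of the first `k` variables `y_k = (x_0, …, x_{k-1})`. -/
def prefixFinset (n k : ℕ) : Finset (Fin n) := Finset.univ.filter fun i => (i : ℕ) < k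

/-- The coefficient polynomial `A_{(y,a)} ∈ F[z]`: the coefficient of the monomial `y^a`
when `A` is written as a polynomial in the variables `y` (those in `S`) with coefficients
in the remaining variables `z`. -/
def coeffWrt {n : ℕ} (S : Finset (Fin n)) (a : Fin n → ℕ) (A : MvPolynomial (Fin n) F) :
    MvPolynomial (Fin n) F :=
  ∑ m ∈ A.support.filter (fun m => ∀ i ∈ S, m i = a i),
    MvPolynomial.monomial (m.filter fun i => i ∉ S) (A.coeff m)

/-- The exponent vector supported on `S` with values given by `a`. -/
def expOn {n : ℕ} (S : Finset (Fin n)) (a : Fin n → ℕ) : Fin n →₀ ℕ :=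
  Finsupp.equivFunOnFinite.symm fun i => if i ∈ S then a i else 0

/-- A family of coefficients (of a polynomial over the `K`-vector space `V`) is
`ℓ`-concentrated over `K` if every coefficient lies in the `K`-span of the coefficients
of monomials of support `< ℓ`. -/
def Concentrated (K : Type*) [Field K] {V : Type*} [AddCommGroup V] [Module K V] {n : ℕ}
    (ℓ : ℕ) (cf : (Fin n →₀ ℕ) → V) : Prop :=
  ∀ a : Fin n →₀ ℕ, cf a ∈ Submodule.span K (cf '' {b | b.support.card < ℓ})

/-- The polynomial `A(x + f(t))`, with coefficients viewed in the rational function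
field `F(t)`. -/
def shiftBy {n : ℕ} (f : Fin n → Polynomial F) (A : MvPolynomial (Fin n) F) :
    MvPolynomial (Fin n) (RatFunc F) :=
  MvPolynomial.aeval
    (fun i => MvPolynomial.X i +
      MvPolynomial.C (algebraMap (Polynomial F) (RatFunc F) (f i))) A

/-- The polynomial `A(x + g(y,t))` for a bivariate shift `g ∈ F[y,t]^n`
(encoded with `y` the outer and `t` the inner variable), with coefficients viewed in the
rational function field `F(y,t)`. -/
def shiftBy₂ {n : ℕ} (g : Fin n → Polynomial (Polynomial F)) (A : MvPolynomial (Fin n) F) :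
    MvPolynomial (Fin n) (RatFunc (RatFunc F)) :=
  MvPolynomial.aeval
    (fun i => MvPolynomial.X i +
      MvPolynomial.C (algebraMap (Polynomial (RatFunc F)) (RatFunc (RatFunc F))
        ((g i).map (algebraMap (Polynomial F) (RatFunc F))))) A

end

/-! Let `V_k` be the span of the coefficient polynomials of `A` with respect to `x_0, …, x_{k-1}`,
so `V_0 = F·A` and `V_n` consists of constants. Each `V_k` is spanned by a family `B_k` of `w`
polynomials (for `k = 0` because `w = 0` forces `V_1 = 0` and hence `A = 0`). Expanding a
coefficient polynomial in powers of `x_k` writes every element of `V_k` as a combination of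
`V_{k+1}` with coefficients univariate in `x_k`, so `B_k = D_k B_{k+1}` for a matrix `D_k` over
`F[x_k]`. Telescoping gives `B_0 = D_0 ⋯ D_{n-1} B_n`, and `A` is an `F`-combination of `B_0`. -/

open Submodule

theorem Submodule.exists_fun_fin_span_range_eq_of_rank_le {K M : Type*} [DivisionRing K]
    [AddCommGroup M] [Module K M] {V : Submodule K M} {w : ℕ} (h : Module.rank K V ≤ w) :
    ∃ B : Fin w → M, span K (Set.range B) = V := by
  have : Module.Finite K V :=
    Module.rank_lt_aleph0_iff.1 (h.trans_lt (Cardinal.natCast_lt_aleph0 (n := w)))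
  have hr : Module.finrank K V ≤ w := Module.finrank_le_of_rank_le h
  let b := Module.finBasis K V
  refine ⟨fun j => if hj : (j : ℕ) < Module.finrank K V then b ⟨j, hj⟩ else 0,
    le_antisymm (span_le.2 ?_) fun x hx => ?_⟩
  · rintro _ ⟨j, rfl⟩
    dsimp only
    split
    exacts [(b _).2, V.zero_mem]
  · rw [show x = ((⟨x, hx⟩ : V) : M) from rfl, ← b.sum_repr ⟨x, hx⟩,
      AddSubmonoidClass.coe_finsetSum]
    refine sum_mem fun i _ => smul_mem _ _ (subset_span ⟨Fin.castLE hr i, ?_⟩)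
    simp

theorem Matrix.eq_list_prod_mulVec_of_eq_mulVec {R ι : Type*} [Semiring R] [Fintype ι]
    [DecidableEq ι] :
    ∀ {n : ℕ} (M : Fin n → Matrix ι ι R) (v : Fin (n + 1) → ι → R),
      (∀ k : Fin n, v k.castSucc = M k *ᵥ v k.succ) →
        v 0 = ((List.finRange n).map M).prod *ᵥ v (Fin.last n)
  | 0, _, _, _ => by simp
  | n + 1, M, v, h => by
    have ih : v 1 = ((List.finRange n).map (M ∘ Fin.succ)).prod *ᵥ v (Fin.last (n + 1)) :=
      eq_list_prod_mulVec_of_eq_mulVec (M ∘ Fin.succ) (v ∘ Fin.succ)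
        fun k => by simpa only [Function.comp_apply, Fin.succ_castSucc] using h k.succ
    rw [List.finRange_succ, List.map_cons, List.map_map, List.prod_cons, ← Matrix.mulVec_mulVec,
      ← ih]
    simpa using h 0

section

variable {F : Type*} [Field F] {n : ℕ}

theorem univariateIn_of_mem_supported {i : Fin n} {p : MvPolynomial (Fin n) F}
    (hp : p ∈ supported F {i}) : UnivariateIn i p := by
  intro m hm j hj
  by_contra hmj
  exact hj <| mem_supported.1 hp <|
    (mem_vars_iff_mem_support j).2 ⟨m, hm, Finsupp.mem_support_iff.2 hmj⟩

theorem exists_univariateIn_mulVec_eq {ι κ : Type*} [Fintype κ] {i : Fin n}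
    {B : ι → MvPolynomial (Fin n) F} {B' : κ → MvPolynomial (Fin n) F}
    (h : ∀ j, B j ∈ span (supported F {i}) (Set.range B')) :
    ∃ D : Matrix ι κ (MvPolynomial (Fin n) F),
      (∀ r c, UnivariateIn i (D r c)) ∧ B = D *ᵥ B' := by
  choose c hc using fun j => (mem_span_range_iff_exists_fun _).1 (h j)
  exact ⟨.of fun j k => c j k, fun r k => univariateIn_of_mem_supported (c r k).2,
    funext fun j => (hc j).symm⟩

theorem expOn_apply (S : Finset (Fin n)) (a : Fin n → ℕ) (i : Fin n) :
    expOn S a i = if i ∈ S then a i else 0 := rfl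

theorem coeff_coeffWrt (S : Finset (Fin n)) (a : Fin n → ℕ) (P : MvPolynomial (Fin n) F)
    (m : Fin n →₀ ℕ) :
    (coeffWrt S a P).coeff m = if ∀ i ∈ S, m i = 0 then P.coeff (m + expOn S a) else 0 := by
  simp only [coeffWrt, coeff_sum, coeff_monomial]
  split_ifs with hm
  · rw [Finset.sum_eq_single (m + expOn S a)]
    · rw [if_pos]
      ext i
      by_cases hi : i ∈ S <;> simp [expOn_apply, hi, hm]
    · rintro m' hm' hne
      rw [if_neg]
      rintro rfl
      refine hne (Finsupp.ext fun i => ?_)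
      by_cases hi : i ∈ S <;> simp [expOn_apply, hi, (Finset.mem_filter.1 hm').2]
    · intro hnot
      rw [if_pos <| Finsupp.ext fun i => by
        by_cases hi : i ∈ S <;> simp [expOn_apply, hi, hm]]
      by_contra hsupp
      refine hnot (Finset.mem_filter.2 ⟨mem_support_iff.2 hsupp, fun i hi => ?_⟩)
      simp [expOn_apply, hi, hm]
  · refine Finset.sum_eq_zero fun m' _ => if_neg ?_
    rintro rfl
    exact hm fun i hi => by simp [hi]

theorem coeffWrt_empty (a : Fin n → ℕ) (P : MvPolynomial (Fin n) F) : coeffWrt ∅ a P = P := by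
  have h0 : expOn ∅ a = 0 := Finsupp.ext fun i => by simp [expOn_apply]
  ext m
  simp [coeff_coeffWrt, h0]

theorem coeffWrt_univ (a : Fin n → ℕ) (P : MvPolynomial (Fin n) F) :
    coeffWrt Finset.univ a P = C (P.coeff (expOn Finset.univ a)) := by
  ext m
  simp only [coeff_coeffWrt, coeff_C, Finset.mem_univ, forall_const]
  by_cases hm : m = 0
  · simp [hm]
  · have hm' : ¬∀ i, m i = 0 := fun h => hm (Finsupp.ext h)
    simp [hm', Ne.symm hm]

theorem coeffWrt_singleton_coeffWrt {S : Finset (Fin n)} {κ : Fin n} (hκ : κ ∉ S)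
    (a : Fin n → ℕ) (b : ℕ) (P : MvPolynomial (Fin n) F) :
    coeffWrt {κ} (fun _ => b) (coeffWrt S a P) =
      coeffWrt (insert κ S) (Function.update a κ b) P := by
  ext m
  simp only [coeff_coeffWrt, Finset.mem_singleton, forall_eq, Finset.mem_insert,
    forall_eq_or_imp]
  have hexp :
      expOn {κ} (fun _ => b) + expOn S a = expOn (insert κ S) (Function.update a κ b) := by
    ext i
    by_cases hi : i = κ
    · subst hi; simp [expOn_apply, hκ]
    · simp [expOn_apply, hi]
  have hS : ∀ i ∈ S, (m + expOn {κ} (fun _ => b)) i = m i := fun i hi => by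
    simp [expOn_apply, ne_of_mem_of_not_mem hi hκ]
  have hcond : (∀ i ∈ S, (m + expOn {κ} (fun _ => b)) i = 0) ↔ ∀ i ∈ S, m i = 0 :=
    forall₂_congr fun i hi => by rw [hS i hi]
  rw [add_assoc, hexp]
  simp only [hcond, ite_and]

theorem IndivDegLE.coeffWrt {d : ℕ} {P : MvPolynomial (Fin n) F} (hP : IndivDegLE d P)
    (S : Finset (Fin n)) (a : Fin n → ℕ) : IndivDegLE d (coeffWrt S a P) := by
  intro m hm i
  rw [mem_support_iff, coeff_coeffWrt] at hm
  split_ifs at hm with hS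
  · have := hP _ (mem_support_iff.2 hm) i
    simp only [Finsupp.add_apply] at this
    omega
  · exact (hm rfl).elim

theorem sum_X_pow_mul_coeffWrt_singleton {κ : Fin n} {d : ℕ} {P : MvPolynomial (Fin n) F}
    (hP : P.degreeOf κ ≤ d) :
    ∑ b ∈ Finset.range (d + 1), X κ ^ b * coeffWrt {κ} (fun _ => b) P = P := by
  ext m
  simp only [coeff_sum, X_pow_eq_monomial, coeff_monomial_mul', one_mul, coeff_coeffWrt,
    Finset.mem_singleton, forall_eq]
  have hm : (m - Finsupp.single κ (m κ)) + expOn {κ} (fun _ => m κ) = m := by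
    ext i
    by_cases hi : i = κ
    · subst hi; simp [expOn_apply]
    · simp [expOn_apply, hi]
  have hterm : ∀ b, (if Finsupp.single κ b ≤ m then
      if (m - Finsupp.single κ b) κ = 0 then
        P.coeff ((m - Finsupp.single κ b) + expOn {κ} fun _ => b) else 0 else 0) =
      if b = m κ then P.coeff m else 0 := by
    intro b
    by_cases hb : b = m κ
    · subst hb; simp [hm]
    · simp only [if_neg hb, Finsupp.single_le_iff, Finsupp.tsub_apply, Finsupp.single_eq_same]
      split_ifs <;> first | rfl | omega
  simp only [hterm, Finset.sum_ite_eq', Finset.mem_range, ite_eq_left_iff, not_lt]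
  intro hd
  by_contra hne
  have := degreeOf_le_iff.1 hP m (mem_support_iff.2 (Ne.symm hne))
  omega

theorem prefixFinset_zero : prefixFinset n 0 = ∅ := by
  simp [prefixFinset]

theorem prefixFinset_self : prefixFinset n n = Finset.univ := by
  simp [prefixFinset]

theorem prefixFinset_succ {k : ℕ} (hk : k < n) :
    prefixFinset n (k + 1) = insert ⟨k, hk⟩ (prefixFinset n k) := by
  ext i
  simp only [prefixFinset, Finset.mem_filter, Finset.mem_univ, true_and, Finset.mem_insert,
    Fin.ext_iff]
  omega

theorem coeffWrt_prefixFinset_eq_sum {d k : ℕ} {A : MvPolynomial (Fin n) F}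
    (hA : IndivDegLE d A) (hk : k < n) (a : Fin n → ℕ) :
    coeffWrt (prefixFinset n k) a A = ∑ b ∈ Finset.range (d + 1),
      X ⟨k, hk⟩ ^ b *
        coeffWrt (prefixFinset n (k + 1)) (Function.update a ⟨k, hk⟩ b) A := by
  have hκ : (⟨k, hk⟩ : Fin n) ∉ prefixFinset n k := by simp [prefixFinset]
  simp only [prefixFinset_succ hk, ← coeffWrt_singleton_coeffWrt hκ]
  exact (sum_X_pow_mul_coeffWrt_singleton
    (degreeOf_le_iff.2 fun m hm => hA.coeffWrt _ _ m hm _)).symm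

noncomputable def prefixCoeffSpan (A : MvPolynomial (Fin n) F) (d k : ℕ) :
    Submodule F (MvPolynomial (Fin n) F) :=
  span F {P | ∃ a : Fin n → ℕ, (∀ i, a i ≤ d) ∧ P = coeffWrt (prefixFinset n k) a A}

theorem coeffWrt_mem_prefixCoeffSpan (A : MvPolynomial (Fin n) F) {d : ℕ} (k : ℕ)
    {a : Fin n → ℕ} (ha : ∀ i, a i ≤ d) :
    coeffWrt (prefixFinset n k) a A ∈ prefixCoeffSpan A d k :=
  subset_span ⟨a, ha, rfl⟩

theorem self_mem_prefixCoeffSpan_zero (A : MvPolynomial (Fin n) F) (d : ℕ) :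
    A ∈ prefixCoeffSpan A d 0 := by
  simpa [prefixFinset_zero, coeffWrt_empty] using
    coeffWrt_mem_prefixCoeffSpan A 0 (a := 0) fun _ => Nat.zero_le d

theorem prefixCoeffSpan_self_le_bot (A : MvPolynomial (Fin n) F) (d : ℕ) :
    prefixCoeffSpan A d n ≤ Subalgebra.toSubmodule ⊥ := by
  refine span_le.2 ?_
  rintro _ ⟨a, -, rfl⟩
  rw [prefixFinset_self, coeffWrt_univ]
  exact Algebra.mem_bot.2 ⟨_, rfl⟩

theorem prefixCoeffSpan_le_span_supported {d k : ℕ} {A : MvPolynomial (Fin n) F}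
    (hA : IndivDegLE d A) (hk : k < n) {ι : Type*} {B : ι → MvPolynomial (Fin n) F}
    (hB : prefixCoeffSpan A d (k + 1) ≤ span F (Set.range B)) :
    prefixCoeffSpan A d k ≤
      (span (supported F {(⟨k, hk⟩ : Fin n)}) (Set.range B)).restrictScalars F := by
  refine span_le.2 ?_
  rintro _ ⟨a, ha, rfl⟩
  rw [coeffWrt_prefixFinset_eq_sum hA hk]
  refine sum_mem fun b hb => ?_
  set R := supported F {(⟨k, hk⟩ : Fin n)}
  have hX : X ⟨k, hk⟩ ^ b ∈ R := pow_mem (X_mem_supported.2 (Set.mem_singleton _)) b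
  have hQ : coeffWrt (prefixFinset n (k + 1)) (Function.update a ⟨k, hk⟩ b) A ∈
      span R (Set.range B) := by
    refine span_le_restrictScalars F _ _ (hB (coeffWrt_mem_prefixCoeffSpan A _ fun i => ?_))
    rw [Function.update_apply]
    split_ifs
    exacts [Nat.lt_succ_iff.1 (Finset.mem_range.1 hb), ha i]
  simpa only [Subalgebra.smul_def, smul_eq_mul, restrictScalars_mem] using
    smul_mem _ (⟨_, hX⟩ : R) hQ

theorem rank_prefixCoeffSpan_zero_le {d w : ℕ} (hn : 0 < n) {A : MvPolynomial (Fin n) F}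
    (hA : IndivDegLE d A) (h₁ : Module.rank F (prefixCoeffSpan A d 1) ≤ w) :
    Module.rank F (prefixCoeffSpan A d 0) ≤ w := by
  rcases Nat.eq_zero_or_pos w with rfl | hw
  · have h₁ : prefixCoeffSpan A d 1 = ⊥ :=
      rank_eq_zero.1 (le_antisymm (by simpa using h₁) zero_le)
    have h₀ := prefixCoeffSpan_le_span_supported hA hn (B := (Fin.elim0 : Fin 0 → _))
      (by simp [h₁])
    simp [le_bot_iff.1 (by simpa using h₀)]
  · calc Module.rank F (prefixCoeffSpan A d 0)
        ≤ Module.rank F (span F {A}) := rank_mono <| span_le.2 <| by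
          rintro _ ⟨a, -, rfl⟩
          rw [prefixFinset_zero, coeffWrt_empty]
          exact mem_span_singleton_self A
      _ ≤ 1 := (rank_span_le _).trans (by simp)
      _ ≤ w := Nat.one_le_cast.2 hw

end

/-- Nisan; converse of Lemma 2.2: if for every `1 ≤ k ≤ n` the `F`-span of
the prefix coefficient polynomials `A_{(y_k, a)}`, `a ∈ {0,…,d}^k`, has dimension at most `w`,
then `A` is computed by an ROABP of width `w` in the variable order `(x_1, …, x_n)`. -/
theorem isROABP_of_prefix_coeff_span_rank_le
    {F : Type*} [Field F] {n w d : ℕ} (hn : 0 < n)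
    (A : MvPolynomial (Fin n) F)
    (hdeg : IndivDegLE d A)
    (hdim : ∀ k, 1 ≤ k → k ≤ n →
      Module.rank F ↥(Submodule.span F
        {P : MvPolynomial (Fin n) F |
          ∃ a : Fin n → ℕ, (∀ i, a i ≤ d) ∧ P = coeffWrt (prefixFinset n k) a A}) ≤ w) :
    IsROABP w (Equiv.refl (Fin n)) A := by
  have hrank : ∀ k : Fin (n + 1), Module.rank F (prefixCoeffSpan A d k) ≤ w :=
    Fin.cases (rank_prefixCoeffSpan_zero_le hn hdeg (hdim 1 le_rfl hn))
      fun k => hdim (k + 1) (Nat.le_add_left 1 k) k.isLt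
  choose B hB using fun k => exists_fun_fin_span_range_eq_of_rank_le (hrank k)
  obtain ⟨u, hu⟩ := (mem_span_range_iff_exists_fun F).1
    ((hB 0).ge (self_mem_prefixCoeffSpan_zero A d))
  choose D hDuni hD using fun k : Fin n => exists_univariateIn_mulVec_eq fun j =>
    prefixCoeffSpan_le_span_supported hdeg k.isLt (hB k.succ).ge
      ((hB k.castSucc).le (subset_span ⟨j, rfl⟩))
  choose v hv using fun j => Algebra.mem_bot.1
    (prefixCoeffSpan_self_le_bot A d ((hB (Fin.last n)).le (subset_span ⟨j, rfl⟩)))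
  refine ⟨replicateRow (Fin 1) u, D, replicateCol (Fin 1) v, hDuni, ?_⟩
  rw [← hu, Matrix.eq_list_prod_mulVec_of_eq_mulVec D B hD, ← funext hv]
  have hrow : (replicateRow (Fin 1) u).map (C (σ := Fin n)) = replicateRow (Fin 1) (C ∘ u) :=
    rfl
  have hcol : (replicateCol (Fin 1) v).map (C (σ := Fin n)) = replicateCol (Fin 1) (C ∘ v) :=
    rfl
  rw [hrow, hcol, Matrix.mul_assoc, layerProd, ← replicateCol_mulVec,
    replicateRow_mul_replicateCol_apply]
  simp only [dotProduct, smul_eq_C_mul, algebraMap_eq]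
  rfl
end

section
/- Let F be a field and let A be an m×m' matrix polynomial (an m×m' matrix with entries in F[x_1,…,x_n]) of individual degree at most d; set k = m·m'. Let w: {1,…,n} → ℕ be a weight function, extended to exponent vectors by w(a) = Σ_{i=1}^n w(i)·a_i. Suppose w is a basis isolating weight assignment for A: there exists S ⊆ {0,1,…,d}^n with |S| ≤ k such that w is injective on S, and for every a ∈ {0,…,d}^n \ S, coeff_A(x^a) lies in the F-span of {coeff_A(x^b) : b ∈ S, w(b) < w(a)}. Then the shifted polynomial A(x_1 + t^{w(1)},…, x_n + t^{w(n)}), whose coefficients lie in F(t)^{m×m'}, is ⌈log₂(k+1)⌉-concentrated over F(t). -/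
open MvPolynomial Matrix

/-!
Write `c_e` for the coefficient of `x^e` in `A`, `w(e) = ∑ wt i * e i` and
`binom(e, a) = ∏ binom(eᵢ, aᵢ)`. Taylor expansion gives
`t^{w(a)} c'_a = ∑_e binom(e, a) t^{w(e)} c_e` for the coefficients `c'_a` of the shifted polynomial. Basis isolation writes every `c_e` as an
`F`-combination of the `c_b`, `b ∈ S`, with `w(b) < w(e)` unless `e = b`; hence
`t^{w(a)} c'_a = ∑_{b ∈ S} N_{a,b}(t) c_b` where `N_{a,b}` is divisible by `t^{w(b)}` with
`t^{w(b)}`-coefficient `binom(b, a)`. It therefore suffices that the rows `N_a` with `|supp a| < ℓ`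
have no common nonzero kernel vector over `F(t)`. Clearing denominators and reducing modulo `t`,
such a vector yields `μ ≠ 0` in `F^S` with `∑_b μ_b binom(b, a) = 0` whenever `|supp a| < ℓ`.
This is impossible for `|S| < 2^ℓ`: split the support of `μ` according to one coordinate; if two
values occur, the smaller fibre has fewer than `2^{ℓ-1}` elements and by induction is detected by
some `a'` with `|supp a'| < ℓ - 1`, and the triangularity of `(binom(β, α))_{β, α}` lets one more
variable detect the whole sum.
-/

open Finset

namespace Finsupp

variable {σ : Type*}

def choose (e a : σ →₀ ℕ) : ℕ := a.prod fun i k => (e i).choose k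

theorem choose_zero_right (e : σ →₀ ℕ) : e.choose 0 = 1 := prod_zero_index

theorem choose_eq_zero_of_lt {e a : σ →₀ ℕ} {i : σ} (h : e i < a i) : e.choose a = 0 :=
  Finset.prod_eq_zero (mem_support_iff.2 (by omega)) (Nat.choose_eq_zero_of_lt h)

theorem choose_add_single {e a : σ →₀ ℕ} {i : σ} (ha : a i = 0) (α : ℕ) :
    e.choose (a + single i α) = e.choose a * (e i).choose α := by
  classical
  rw [choose, prod_add_index_of_disjoint,
    prod_single_index (h := fun i k => (e i).choose k) (Nat.choose_zero_right _), choose]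
  · exact Finset.disjoint_of_subset_right support_single_subset
      (Finset.disjoint_singleton_right.2 (notMem_support_iff.2 ha))

theorem choose_eq_prod [Fintype σ] (e a : σ →₀ ℕ) : e.choose a = ∏ i, (e i).choose (a i) :=
  prod_fintype _ _ fun _ => Nat.choose_zero_right _

theorem support_add_single_subset [DecidableEq σ] (a : σ →₀ ℕ) (i : σ) (α : ℕ) :
    (a + single i α).support ⊆ insert i a.support := by
  refine support_add.trans (union_subset (subset_insert _ _) ?_)
  exact support_single_subset.trans (singleton_subset_iff.2 (mem_insert_self _ _))

end Finsupp

theorem exists_sum_choose_mul_ne_zero {R : Type*} [Semiring R] (B : Finset ℕ) (g : ℕ → R)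
    (h : ∃ β ∈ B, g β ≠ 0) : ∃ α, ∑ β ∈ B, (β.choose α : R) * g β ≠ 0 := by
  classical
  have hne : (B.filter (g · ≠ 0)).Nonempty := by simpa [Finset.Nonempty] using h
  set α := (B.filter (g · ≠ 0)).max' hne
  obtain ⟨hαB, hα⟩ := mem_filter.1 (max'_mem _ hne)
  refine ⟨α, ?_⟩
  rwa [sum_eq_single_of_mem α hαB, Nat.choose_self, Nat.cast_one, one_mul]
  intro β hβ hne
  by_cases hg : g β = 0
  · rw [hg, mul_zero]
  · have : β < α := lt_of_le_of_ne (le_max' _ _ (mem_filter.2 ⟨hβ, hg⟩)) hne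
    rw [Nat.choose_eq_zero_of_lt this, Nat.cast_zero, zero_mul]

theorem exists_sum_mul_choose_ne_zero_of_eqOn {σ R : Type*} [DecidableEq σ] [Semiring R]
    (I : Finset σ) (ℓ : ℕ) (T : Finset (σ →₀ ℕ)) (μ : (σ →₀ ℕ) → R)
    (hT : ∀ b ∈ T, ∀ b' ∈ T, ∀ j ∉ I, b j = b' j) (hμ : ∃ b ∈ T, μ b ≠ 0)
    (hcard : T.card < 2 ^ ℓ) :
    ∃ a : σ →₀ ℕ, a.support ⊆ I ∧ a.support.card < ℓ ∧ ∑ b ∈ T, μ b * b.choose a ≠ 0 := by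
  induction I using Finset.induction_on generalizing ℓ T with
  | empty =>
    obtain ⟨b₀, hb₀, hμ₀⟩ := hμ
    obtain rfl : T = {b₀} := eq_singleton_iff_unique_mem.2
      ⟨hb₀, fun b hb => Finsupp.ext fun j => hT b hb b₀ hb₀ j (notMem_empty j)⟩
    refine ⟨0, by simp, ?_, by simpa [Finsupp.choose_zero_right] using hμ₀⟩
    simpa [Nat.one_lt_two_pow_iff, Nat.pos_iff_ne_zero] using hcard
  | insert i₀ I hi₀ ih =>
    set fiber : ℕ → Finset (σ →₀ ℕ) := fun β => T.filter (· i₀ = β)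
    have hfiber : ∀ β ℓ', (∃ b ∈ fiber β, μ b ≠ 0) → (fiber β).card < 2 ^ ℓ' →
        ∃ a : σ →₀ ℕ, a.support ⊆ I ∧ a.support.card < ℓ' ∧
          ∑ b ∈ fiber β, μ b * b.choose a ≠ 0 := by
      refine fun β ℓ' => ih ℓ' _ fun b hb b' hb' j hj => ?_
      obtain ⟨hbT, rfl⟩ := mem_filter.1 hb
      obtain ⟨hbT', hbb'⟩ := mem_filter.1 hb'
      by_cases hji : j = i₀
      · rw [hji, hbb']
      · exact hT b hbT b' hbT' j (by simp [hji, hj])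
    by_cases hsplit : ∃ b₁ ∈ T, ∃ b₂ ∈ T, μ b₁ ≠ 0 ∧ μ b₂ ≠ 0 ∧ b₁ i₀ ≠ b₂ i₀
    · obtain ⟨b₁, hb₁, b₂, hb₂, hμ₁, hμ₂, hne⟩ := hsplit
      -- the two fibres are disjoint, so one of them has at most half of the elements
      have hsmall : ∃ b ∈ T, μ b ≠ 0 ∧ 2 * (fiber (b i₀)).card < 2 ^ ℓ := by
        have : (fiber (b₁ i₀)).card + (fiber (b₂ i₀)).card ≤ T.card := by
          rw [← card_union_of_disjoint (disjoint_filter.2 fun b _ h => h ▸ hne)]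
          exact card_le_card (union_subset (filter_subset _ _) (filter_subset _ _))
        rcases le_total (fiber (b₁ i₀)).card (fiber (b₂ i₀)).card with h | h
        · exact ⟨b₁, hb₁, hμ₁, by omega⟩
        · exact ⟨b₂, hb₂, hμ₂, by omega⟩
      obtain ⟨b, hbT, hμb, hsmall⟩ := hsmall
      obtain _ | ℓ := ℓ
      · rw [pow_zero, Nat.lt_one_iff, card_eq_zero] at hcard
        simp [hcard] at hbT
      obtain ⟨a, haI, hacard, ha⟩ :=
        hfiber (b i₀) ℓ ⟨b, mem_filter.2 ⟨hbT, rfl⟩, hμb⟩ (by rw [pow_succ] at hsmall; omega)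
      have ha₀ : a i₀ = 0 := Finsupp.notMem_support_iff.1 fun h => hi₀ (haI h)
      obtain ⟨α, hα⟩ := exists_sum_choose_mul_ne_zero (T.image (· i₀))
        (fun β => ∑ b ∈ fiber β, μ b * b.choose a) ⟨b i₀, mem_image_of_mem _ hbT, ha⟩
      refine ⟨a + Finsupp.single i₀ α, (Finsupp.support_add_single_subset a i₀ α).trans
        (insert_subset_insert _ haI), ?_, ?_⟩
      · have := card_le_card (Finsupp.support_add_single_subset a i₀ α)
        have := card_insert_le i₀ a.support
        omega
      · convert hα using 1
        rw [← sum_fiberwise_of_maps_to (t := T.image (· i₀)) fun b hb => mem_image_of_mem _ hb]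
        refine sum_congr rfl fun β _ => ?_
        rw [mul_sum]
        refine sum_congr rfl fun b hb => ?_
        rw [Finsupp.choose_add_single ha₀, (mem_filter.1 hb).2, Nat.cast_mul, ← mul_assoc]
        exact (Nat.cast_commute _ _).eq.symm
    · push Not at hsplit
      obtain ⟨b₀, hb₀, hμ₀⟩ := hμ
      obtain ⟨a, haI, hacard, ha⟩ := hfiber (b₀ i₀) ℓ ⟨b₀, mem_filter.2 ⟨hb₀, rfl⟩, hμ₀⟩
        ((card_filter_le _ _).trans_lt hcard)
      refine ⟨a, haI.trans (subset_insert _ _), hacard, ?_⟩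
      rwa [sum_filter_of_ne fun b hb h => hsplit b hb b₀ hb₀ (left_ne_zero_of_mul h) hμ₀] at ha

theorem exists_support_card_lt_sum_mul_choose_ne_zero {σ R : Type*} [Semiring R]
    {ℓ : ℕ} (T : Finset (σ →₀ ℕ)) (μ : (σ →₀ ℕ) → R) (hμ : ∃ b ∈ T, μ b ≠ 0)
    (hcard : T.card < 2 ^ ℓ) :
    ∃ a : σ →₀ ℕ, a.support.card < ℓ ∧ ∑ b ∈ T, μ b * b.choose a ≠ 0 := by
  classical
  obtain ⟨a, -, ha⟩ := exists_sum_mul_choose_ne_zero_of_eqOn (T.biUnion (·.support)) ℓ T μ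
    (fun b hb b' hb' j hj => by
      simp only [mem_biUnion, Finsupp.mem_support_iff, not_exists, not_and, not_not] at hj
      rw [hj b hb, hj b' hb'])
    hμ hcard
  exact ⟨a, ha⟩

namespace MvPolynomial

variable {σ R : Type*} [CommSemiring R]

theorem X_add_C_pow_eq_sum (i : σ) (c : R) (k : ℕ) :
    (X i + C c : MvPolynomial σ R) ^ k =
      ∑ j ∈ range (k + 1), monomial (Finsupp.single i j) (c ^ (k - j) * k.choose j) := by
  rw [add_pow]
  refine sum_congr rfl fun j _ => ?_
  rw [X_pow_eq_monomial, ← C_pow, ← map_natCast (C : R →+* MvPolynomial σ R), mul_assoc, ← C_mul,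
    mul_comm, C_mul_monomial, mul_one]

variable [Fintype σ]

theorem coeff_prod_X_add_C_pow (s : σ → R) (e a : σ →₀ ℕ) :
    coeff a (∏ i, (X i + C (s i)) ^ e i) = ∏ i, s i ^ (e i - a i) * (e i).choose (a i) := by
  classical
  have hsum : ∀ g : σ → ℕ, ∑ i, Finsupp.single i (g i) = a ↔ g = ⇑a := fun g =>
    ⟨fun h => h ▸ (Finsupp.coe_univ_sum_single g).symm, fun h => h ▸ Finsupp.univ_sum_single a⟩
  simp_rw [X_add_C_pow_eq_sum, prod_univ_sum, ← monomial_sum_prod, coeff_sum, coeff_monomial, hsum,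
    sum_ite_eq']
  split_ifs with ha
  · rfl
  · obtain ⟨i, hi⟩ : ∃ i, e i < a i := by simpa [Fintype.mem_piFinset] using ha
    refine (prod_eq_zero (mem_univ i) ?_).symm
    rw [Nat.choose_eq_zero_of_lt hi, Nat.cast_zero, mul_zero]

theorem coeff_aeval_X_add_C {A : Type*} [CommSemiring A] [Algebra R A] (s : σ → A)
    (p : MvPolynomial σ R) (a : σ →₀ ℕ) :
    coeff a (aeval (fun i => X i + C (s i)) p) =
      ∑ e ∈ p.support,
        algebraMap R A (coeff e p) * ∏ i, s i ^ (e i - a i) * (e i).choose (a i) := by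
  conv_lhs => rw [p.as_sum, map_sum, coeff_sum]
  refine sum_congr rfl fun e _ => ?_
  rw [aeval_monomial, algebraMap_apply, coeff_C_mul, Finsupp.prod_fintype _ _ fun _ => pow_zero _,
    coeff_prod_X_add_C_pow]

end MvPolynomial

theorem pow_sum_mul_mul_prod_pow_sub_mul_choose {σ R : Type*} [Fintype σ] [CommSemiring R]
    (t : R) (wt : σ → ℕ) (e a : σ →₀ ℕ) :
    t ^ (∑ i, wt i * a i) * ∏ i, (t ^ wt i) ^ (e i - a i) * (e i).choose (a i) =
      e.choose a * t ^ (∑ i, wt i * e i) := by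
  by_cases hle : ∀ i, a i ≤ e i
  · have hsum : ∑ i, wt i * a i + ∑ i, wt i * (e i - a i) = ∑ i, wt i * e i := by
      rw [← sum_add_distrib]
      exact sum_congr rfl fun i _ => by rw [← mul_add, Nat.add_sub_cancel' (hle i)]
    simp_rw [prod_mul_distrib, ← pow_mul, prod_pow_eq_pow_sum, ← Nat.cast_prod,
      ← Finsupp.choose_eq_prod, ← hsum, pow_add]
    ring
  · obtain ⟨i, hi⟩ : ∃ i, e i < a i := by simpa using hle
    rw [Finsupp.choose_eq_zero_of_lt hi, prod_eq_zero (mem_univ i), Nat.cast_zero, mul_zero,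
      zero_mul]
    rw [Nat.choose_eq_zero_of_lt hi, Nat.cast_zero, mul_zero]

theorem X_pow_mul_coeff_shiftBy {F : Type*} [Field F] {n : ℕ} (wt : Fin n → ℕ)
    (p : MvPolynomial (Fin n) F) {E : Finset (Fin n →₀ ℕ)} (hE : p.support ⊆ E) (a : Fin n →₀ ℕ) :
    RatFunc.X ^ (∑ i, wt i * a i) * (shiftBy (fun i => Polynomial.X ^ wt i) p).coeff a =
      ∑ e ∈ E, ((e.choose a : RatFunc F) * RatFunc.X ^ (∑ i, wt i * e i)) *
        algebraMap F (RatFunc F) (p.coeff e) := by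
  rw [shiftBy, coeff_aeval_X_add_C]
  simp only [map_pow, RatFunc.algebraMap_X]
  rw [mul_sum, sum_subset hE fun e _ he => by simp [notMem_support_iff.1 he]]
  refine sum_congr rfl fun e _ => ?_
  rw [mul_left_comm, pow_sum_mul_mul_prod_pow_sub_mul_choose, mul_comm]

section LinearAlgebra

variable {K : Type*} [Field K]

theorem Submodule.span_eq_top_of_forall_dotProduct_eq_zero {κ : Type*} [Fintype κ]
    (vs : Set (κ → K)) (h : ∀ c : κ → K, (∀ v ∈ vs, v ⬝ᵥ c = 0) → c = 0) : span K vs = ⊤ := by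
  classical
  by_contra hne
  obtain ⟨f, hf0, hf⟩ := exists_dual_map_eq_bot_of_lt_top (lt_top_iff_ne_top.2 hne) inferInstance
  have hc := h (fun i => f fun j => if i = j then 1 else 0) fun v hv => by
    have hfv := mem_map_of_mem (f := f) (subset_span hv)
    rw [hf, mem_bot, LinearMap.pi_apply_eq_sum_univ f v] at hfv
    simpa [dotProduct] using hfv
  exact hf0 (LinearMap.ext fun x => by simp [LinearMap.pi_apply_eq_sum_univ f x, congrFun hc])

theorem concentrated_sum_smul {W κ : Type*} [AddCommGroup W] [Module K W] [Fintype κ]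
    {n ℓ : ℕ} (r : (Fin n →₀ ℕ) → κ → K) (u : κ → W)
    (h : ∀ c : κ → K, (∀ a : Fin n →₀ ℕ, a.support.card < ℓ → r a ⬝ᵥ c = 0) → c = 0) :
    Concentrated K ℓ fun a => ∑ b, r a b • u b := by
  intro a
  have hspan := Submodule.span_eq_top_of_forall_dotProduct_eq_zero (r '' {b | b.support.card < ℓ})
    fun c hc => h c fun a ha => hc _ ⟨a, ha, rfl⟩
  have := Submodule.mem_map_of_mem (f := Fintype.linearCombination K u)
    (hspan ▸ Submodule.mem_top : r a ∈ Submodule.span K (r '' {b | b.support.card < ℓ}))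
  simpa only [Submodule.map_span, ← Set.image_comp, Function.comp_def,
    Fintype.linearCombination_apply] using this

theorem Concentrated.of_smul {V : Type*} [AddCommGroup V] [Module K V] {n ℓ : ℕ}
    {cf d : (Fin n →₀ ℕ) → V} (r : (Fin n →₀ ℕ) → K) (hr : ∀ a, r a ≠ 0)
    (h : ∀ a, r a • cf a = d a) (hd : Concentrated K ℓ d) : Concentrated K ℓ cf := by
  intro a
  rw [← inv_smul_smul₀ (hr a) (cf a), h]
  refine Submodule.smul_mem _ _ (Submodule.span_le.2 ?_ (hd a))
  rintro _ ⟨b, hb, rfl⟩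
  rw [← h b]
  exact Submodule.smul_mem _ _ (Submodule.subset_span ⟨b, hb, rfl⟩)

end LinearAlgebra

section ReductionModX

open Polynomial

variable {F κ : Type*} [Field F] [Fintype κ]

theorem RatFunc.exists_polynomial_multiple_coeff_zero_ne_zero {c : κ → RatFunc F}
    (hc : c ≠ 0) :
    ∃ (d : RatFunc F) (q : κ → F[X]), d ≠ 0 ∧
      (∀ b, algebraMap F[X] (RatFunc F) (q b) = d * c b) ∧ ∃ b, (q b).coeff 0 ≠ 0 := by
  classical
  obtain ⟨⟨D, hD⟩, hint⟩ :=
    IsLocalization.exist_integer_multiples_of_finite (nonZeroDivisors F[X]) c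
  choose p hp using hint
  simp only [Algebra.smul_def] at hp
  have hD0 : algebraMap F[X] (RatFunc F) D ≠ 0 :=
    RatFunc.algebraMap_ne_zero (nonZeroDivisors.ne_zero hD)
  obtain ⟨b₁, hb₁⟩ := Function.ne_iff.1 hc
  have hp₁ : p b₁ ≠ 0 := fun h => hb₁ (by simpa [h, hD0] using (hp b₁).symm)
  obtain ⟨b₀, hb₀, hmin⟩ := exists_min_image (univ.filter (p · ≠ 0))
    (fun b => (p b).natTrailingDegree) ⟨b₁, mem_filter.2 ⟨mem_univ _, hp₁⟩⟩
  set k := (p b₀).natTrailingDegree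
  have hdvd : ∀ b, Polynomial.X ^ k ∣ p b := fun b =>
    (X_pow_dvd_iff (f := p b)).2 fun j hj => by
    by_cases hb : p b = 0
    · rw [hb, Polynomial.coeff_zero]
    · exact coeff_eq_zero_of_lt_natTrailingDegree (hj.trans_le (hmin b (by simpa using hb)))
  choose q hq using hdvd
  refine ⟨algebraMap F[X] (RatFunc F) D / RatFunc.X ^ k, q,
    div_ne_zero hD0 (pow_ne_zero _ RatFunc.X_ne_zero), fun b => ?_, b₀, ?_⟩
  · have := hp b
    rw [hq b, map_mul, map_pow, RatFunc.algebraMap_X] at this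
    rw [div_mul_eq_mul_div, eq_div_iff (pow_ne_zero _ RatFunc.X_ne_zero), mul_comm, this]
  · have h0 : (p b₀).coeff k ≠ 0 := mt trailingCoeff_eq_zero.1 (mem_filter.1 hb₀).2
    rwa [hq b₀, coeff_X_pow_mul', if_pos le_rfl, Nat.sub_self] at h0

theorem exists_ne_zero_forall_coeff_zero_dotProduct_eq_zero {α : Type*} (Q : α → κ → F[X])
    (s : Set α) (c : κ → RatFunc F) (hc : c ≠ 0)
    (h : ∀ a ∈ s, (fun b => algebraMap F[X] (RatFunc F) (Q a b)) ⬝ᵥ c = 0) :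
    ∃ μ : κ → F, μ ≠ 0 ∧ ∀ a ∈ s, (fun b => (Q a b).coeff 0) ⬝ᵥ μ = 0 := by
  obtain ⟨d, q, hd, hq, b₀, hb₀⟩ := RatFunc.exists_polynomial_multiple_coeff_zero_ne_zero hc
  refine ⟨fun b => (q b).coeff 0, Function.ne_iff.2 ⟨b₀, hb₀⟩, fun a ha => ?_⟩
  have hpoly : ∑ b, Q a b * q b = 0 := by
    apply RatFunc.algebraMap_injective F
    simp only [map_sum, map_mul, hq, map_zero]
    have := congrArg (d * ·) (h a ha)
    simpa [dotProduct, mul_sum, mul_left_comm] using this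
  simpa [dotProduct, ← mul_coeff_zero, finsetSum_coeff] using congrArg (Polynomial.coeff · 0) hpoly

end ReductionModX

open Polynomial in
theorem eq_zero_of_forall_support_card_lt_dotProduct_eq_zero {σ F : Type*} [Field F] {ℓ : ℕ}
    (S : Finset (σ →₀ ℕ)) (hS : S.card < 2 ^ ℓ) (w : (σ →₀ ℕ) → ℕ) (N : (σ →₀ ℕ) → S → F[X])
    (hdvd : ∀ a (b : S), Polynomial.X ^ w b ∣ N a b)
    (hcoeff : ∀ a (b : S), (N a b).coeff (w b) = (b : σ →₀ ℕ).choose a) (c : S → RatFunc F)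
    (h : ∀ a : σ →₀ ℕ, a.support.card < ℓ →
      (fun b => algebraMap F[X] (RatFunc F) (N a b)) ⬝ᵥ c = 0) :
    c = 0 := by
  classical
  by_contra hc
  choose Q hQ using hdvd
  have hQ0 : ∀ a (b : S), (Q a b).coeff 0 = (b : σ →₀ ℕ).choose a := fun a b => by
    rw [← hcoeff, hQ]
    simpa using (coeff_X_pow_mul (Q a b) (w b) 0).symm
  obtain ⟨μ, hμ, hμQ⟩ := exists_ne_zero_forall_coeff_zero_dotProduct_eq_zero Q
    {a | a.support.card < ℓ} (fun b : S => RatFunc.X ^ w b * c b)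
    (fun h0 => hc (funext fun b => by simpa [RatFunc.X_ne_zero] using congrFun h0 b))
    fun a ha => by
      simpa [dotProduct, hQ, RatFunc.algebraMap_X, mul_assoc, mul_left_comm] using h a ha
  obtain ⟨b₀, hb₀⟩ := Function.ne_iff.1 hμ
  obtain ⟨a, ha, hne⟩ := exists_support_card_lt_sum_mul_choose_ne_zero S
    (fun e => if he : e ∈ S then μ ⟨e, he⟩ else 0) ⟨b₀, b₀.2, by simpa using hb₀⟩ hS
  refine hne ?_
  rw [← sum_coe_sort S]
  simpa [dotProduct, hQ0, mul_comm] using hμQ a ha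

theorem Finset.sum_smul_eq_sum_sum_mul_smul {R K W ι : Type*} [CommSemiring R] [Semiring K]
    [Algebra R K] [AddCommMonoid W] [Module R W] [Module K W] [IsScalarTower R K W] {u : ι → W}
    {κ : ι → ι → R} {E S : Finset ι} (hexp : ∀ e ∈ E, ∑ b ∈ S, κ e b • u b = u e) (r : ι → K) :
    ∑ e ∈ E, r e • u e = ∑ b ∈ S, (∑ e ∈ E, r e * algebraMap R K (κ e b)) • u b := by
  simp_rw [sum_smul, mul_smul, algebraMap_smul]
  rw [sum_comm]
  exact sum_congr rfl fun e he => by rw [← smul_sum, hexp e he]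

theorem exists_triangular_expansion {R W ι : Type*} [Semiring R] [AddCommMonoid W] [Module R W]
    (u : ι → W) (w : ι → ℕ) (E S : Finset ι)
    (hiso : ∀ e ∈ E, e ∉ S → u e ∈ Submodule.span R (u '' {b | b ∈ S ∧ w b < w e})) :
    ∃ κ : ι → ι → R, (∀ e ∈ E, ∑ b ∈ S, κ e b • u b = u e) ∧
      (∀ e b, κ e b ≠ 0 → e = b ∨ w b < w e) ∧ ∀ b ∈ S, κ b b = 1 := by
  classical
  have hc : ∀ e, ∃ c : ι → R, e ∈ E → e ∉ S → ∑ b ∈ S.filter (w · < w e), c b • u b = u e := by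
    intro e
    by_cases he : e ∈ E ∧ e ∉ S
    · have := hiso e he.1 he.2
      rw [show {b | b ∈ S ∧ w b < w e} = ↑(S.filter (w · < w e)) by ext; simp,
        Submodule.mem_span_image_finset_iff_exists_fun'] at this
      exact this.imp fun c hc _ _ => hc
    · exact ⟨0, fun h₁ h₂ => (he ⟨h₁, h₂⟩).elim⟩
  choose c hc using hc
  refine ⟨fun e b => if e ∈ S then (if e = b then 1 else 0) else if w b < w e then c e b else 0,
    fun e he => ?_, fun e b => ?_, fun b hb => by simp [hb]⟩
  · by_cases heS : e ∈ S
    · simp [heS]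
    · simp only [heS, if_false, ite_smul, zero_smul]
      rw [← sum_filter]
      exact hc e he heS
  · dsimp only
    split_ifs <;> simp_all

theorem concentrated_of_isolating {F W : Type*} [Field F] [AddCommGroup W] [Module (RatFunc F) W]
    [Module F W] [IsScalarTower F (RatFunc F) W] {n ℓ : ℕ} (u : (Fin n →₀ ℕ) → W)
    (w : (Fin n →₀ ℕ) → ℕ) (E S : Finset (Fin n →₀ ℕ)) (hSE : S ⊆ E)
    (hiso : ∀ e ∈ E, e ∉ S → u e ∈ Submodule.span F (u '' {b | b ∈ S ∧ w b < w e}))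
    (hS : S.card < 2 ^ ℓ) :
    Concentrated (RatFunc F) ℓ fun a =>
      ∑ e ∈ E, ((e.choose a : RatFunc F) * RatFunc.X ^ w e) • u e := by
  obtain ⟨κ, hexp, htri, hdiag⟩ := exists_triangular_expansion u w E S hiso
  set N : (Fin n →₀ ℕ) → S → Polynomial F := fun a b =>
    ∑ e ∈ E, Polynomial.C (κ e b * e.choose a) * Polynomial.X ^ w e
  have hN : ∀ a, ∑ e ∈ E, ((e.choose a : RatFunc F) * RatFunc.X ^ w e) • u e =
      ∑ b : S, algebraMap (Polynomial F) (RatFunc F) (N a b) • u b := fun a => by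
    rw [sum_smul_eq_sum_sum_mul_smul hexp, ← sum_coe_sort S]
    refine sum_congr rfl fun b _ => congrArg (· • u b) ?_
    simp only [N, map_sum]
    refine sum_congr rfl fun e _ => ?_
    simp only [map_mul, map_pow, map_natCast, RatFunc.algebraMap_C, RatFunc.algebraMap_X,
      RatFunc.algebraMap_eq_C]
    ring
  have hdvd : ∀ a (b : S), Polynomial.X ^ w b ∣ N a b := fun a b => dvd_sum fun e _ => by
    by_cases hκ : κ e b = 0
    · simp [hκ]
    · refine dvd_mul_of_dvd_right (pow_dvd_pow _ ?_) _
      rcases htri e b hκ with rfl | h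
      exacts [le_rfl, h.le]
  have hcoeff : ∀ a (b : S), (N a b).coeff (w b) = (b : Fin n →₀ ℕ).choose a := by
    intro a b
    simp only [N, Polynomial.finsetSum_coeff, Polynomial.coeff_C_mul_X_pow]
    rw [sum_eq_single_of_mem (b : Fin n →₀ ℕ) (hSE b.2), if_pos rfl, hdiag b b.2, one_mul]
    intro e _ hne
    split_ifs with hw
    · rcases eq_or_ne (κ e b) 0 with hκ | hκ
      · rw [hκ, zero_mul]
      · rcases htri e b hκ with h | h
        · exact (hne h).elim
        · omega
    · rfl
  simp only [hN]
  exact concentrated_sum_smul _ _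
    (eq_zero_of_forall_support_card_lt_dotProduct_eq_zero S hS w N hdvd hcoeff)

theorem basis_isolating_weight_gives_concentration_general
    {F : Type*} [Field F] {n d m m' : ℕ}
    (A : Matrix (Fin m) (Fin m') (MvPolynomial (Fin n) F))
    (hdeg : ∀ r c, IndivDegLE d (A r c))
    (wt : Fin n → ℕ)
    (S : Finset (Fin n →₀ ℕ))
    (hScard : S.card ≤ m * m')
    (hiso : ∀ a : Fin n →₀ ℕ, (∀ i, a i ≤ d) → a ∉ S →
      (Matrix.of fun r c => (A r c).coeff a) ∈ Submodule.span F
        {v : Matrix (Fin m) (Fin m') F | ∃ b ∈ S,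
          (∑ i, wt i * b i) < (∑ i, wt i * a i) ∧
          v = Matrix.of fun r c => (A r c).coeff b}) :
    Concentrated (RatFunc F) (Nat.clog 2 (m * m' + 1))
      (fun a => Matrix.of fun r c =>
        (shiftBy (fun i => Polynomial.X ^ wt i) (A r c)).coeff a) := by
  classical
  set E := S ∪ univ.biUnion fun rc : Fin m × Fin m' => (A rc.1 rc.2).support
  have hsupp : ∀ r c, (A r c).support ⊆ E := fun r c =>
    (subset_biUnion_of_mem (fun rc : Fin m × Fin m' => (A rc.1 rc.2).support)
      (mem_univ (r, c))).trans subset_union_right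
  refine Concentrated.of_smul (fun a => RatFunc.X ^ (∑ i, wt i * a i))
    (fun a => pow_ne_zero _ RatFunc.X_ne_zero) (fun a => ?_)
    (concentrated_of_isolating (fun e => (Matrix.of fun r c => (A r c).coeff e).map
      (algebraMap F (RatFunc F))) (fun e => ∑ i, wt i * e i) E S subset_union_left ?_
      ((Nat.lt_succ_of_le hScard).trans_le (Nat.le_pow_clog one_lt_two _)))
  · ext r c
    simp [Matrix.sum_apply, X_pow_mul_coeff_shiftBy wt (A r c) (hsupp r c)]
  · intro e he heS
    obtain ⟨⟨r, c⟩, -, hrc⟩ := mem_biUnion.1 ((mem_union.1 he).resolve_left heS)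
    have := Submodule.mem_map_of_mem (f := (Algebra.linearMap F (RatFunc F)).mapMatrix)
      (hiso e (hdeg r c e hrc) heS)
    rw [Submodule.map_span] at this
    refine Submodule.span_mono ?_ this
    rintro _ ⟨_, ⟨b, hb, hlt, rfl⟩, rfl⟩
    exact ⟨b, ⟨hb, hlt⟩, rfl⟩

/-- Lemma 5.2 of the paper, isolation to concentration: if `wt` is a basis
isolating weight assignment for the matrix polynomial `A` of individual degree ≤ d over the
`k`-dimensional algebra `F^{m×m'}` (`k = m·m'`), then the shift `xᵢ ↦ xᵢ + t^{wt i}` makes `A`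
`⌈log₂(k+1)⌉`-concentrated over `F(t)`. -/
theorem basis_isolating_weight_gives_concentration
    {F : Type*} [Field F] {n d m m' : ℕ}
    (A : Matrix (Fin m) (Fin m') (MvPolynomial (Fin n) F))
    (hdeg : ∀ r c, IndivDegLE d (A r c))
    (wt : Fin n → ℕ)
    (S : Finset (Fin n →₀ ℕ))
    (hSdeg : ∀ b ∈ S, ∀ i, b i ≤ d)
    (hScard : S.card ≤ m * m')
    (hSinj : ∀ a ∈ S, ∀ b ∈ S, (∑ i, wt i * a i) = (∑ i, wt i * b i) → a = b)
    (hiso : ∀ a : Fin n →₀ ℕ, (∀ i, a i ≤ d) → a ∉ S →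
      (Matrix.of fun r c => (A r c).coeff a) ∈ Submodule.span F
        {v : Matrix (Fin m) (Fin m') F | ∃ b ∈ S,
          (∑ i, wt i * b i) < (∑ i, wt i * a i) ∧
          v = Matrix.of fun r c => (A r c).coeff b}) :
    Concentrated (RatFunc F) (Nat.clog 2 (m * m' + 1))
      (fun a => Matrix.of fun r c =>
        (shiftBy (fun i => Polynomial.X ^ wt i) (A r c)).coeff a) :=
  basis_isolating_weight_gives_concentration_general A hdeg wt S hScard hiso
end

section
/- Let F be a field and let n, d ≥ 1 and ℓ ≥ 1 be integers. Let M = {0,1,…,d}^n and M_ℓ = {a ∈ M : supp(a) < ℓ}. Define the M_ℓ × M matrix T_ℓ over F whose entry at row a ∈ M_ℓ and column b ∈ M is the product of binomial coefficients ∏_{i=1}^n C(b_i, a_i), viewed in F. Then any set of at most 2^ℓ − 1 columns of T_ℓ is F-linearly independent. -/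
/-!
Writing `P = ∑_b c_b x^b`, the columns indexed by `b` combine with coefficients `c_b` to the
coefficients of `P(x + 1)` on monomials of support `< ℓ`, so it suffices to show that if `P ≠ 0`
has fewer than `2^ℓ` monomials, then `P(x + 1)` has a nonzero coefficient of support `< ℓ`.
Induct on the number of variables, splitting off `x₀`. If `P(1, x')` is nonzero, its shift is the
`x₀⁰`-part of `P(x + 1)` and the induction hypothesis applies with the same `ℓ`. Otherwise every
monomial of `P` shares its `x'`-part with another one, so the leading coefficient of `P` in `x₀`
(whose shift is the top `x₀`-coefficient of `P(x + 1)`) has fewer than `2^(ℓ-1)` monomials, and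
the induction hypothesis at `ℓ - 1` provides the rest of the exponent.
-/

open MvPolynomial Matrix

open Finset

namespace Finsupp

variable {M : Type*} [Zero M] {n : ℕ}

theorem card_support_cons_le (y : M) (s : Fin n →₀ M) :
    #(cons y s).support ≤ #s.support + 1 :=
  calc #(cons y s).support ≤ #(insert 0 (s.support.map (Fin.succEmb n))) :=
        card_le_card cons_support
    _ ≤ #s.support + 1 := (card_insert_le _ _).trans_eq (by rw [card_map])

theorem card_support_cons_zero_le (s : Fin n →₀ M) : #(cons 0 s).support ≤ #s.support :=
  calc #(cons 0 s).support ≤ #(s.support.map (Fin.succEmb n)) := card_le_card fun i hi => by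
        have hi0 : i ≠ 0 := by rintro rfl; simp at hi
        simpa [hi0] using cons_support hi
    _ = #s.support := card_map _

end Finsupp

noncomputable section BinomialTransform

variable {R : Type*} [CommSemiring R] {n : ℕ}

/-- The coefficient of `x^a` in `∑_b c_b (x + 1)^b`. -/
def binomialTransform (c : (Fin n →₀ ℕ) →₀ R) (a : Fin n →₀ ℕ) : R :=
  c.sum fun b x => x * ∏ i, ((b i).choose (a i) : R)

/-- `∑_b c_b C(b₀, k) x'^{b'}` for `b = (b₀, b')`; shifting `x' ↦ x' + 1` turns it into the
coefficient of `x₀^k` in `∑_b c_b (x + 1)^b`. -/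
def binomialHead (k : ℕ) (c : (Fin (n + 1) →₀ ℕ) →₀ R) : (Fin n →₀ ℕ) →₀ R :=
  c.sum fun b x => Finsupp.single b.tail ((b 0).choose k * x)

theorem binomialTransform_eq_zero_of_forall_exists_lt {c : (Fin n →₀ ℕ) →₀ R} {a : Fin n →₀ ℕ}
    (h : ∀ b ∈ c.support, ∃ i, b i < a i) : binomialTransform c a = 0 :=
  Finset.sum_eq_zero fun b hb => by
    obtain ⟨i, hi⟩ := h b hb
    dsimp only
    rw [Finset.prod_eq_zero (mem_univ i) (by simp [Nat.choose_eq_zero_of_lt hi]), mul_zero]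

theorem binomialTransform_binomialHead (k : ℕ) (c : (Fin (n + 1) →₀ ℕ) →₀ R)
    (a : Fin n →₀ ℕ) :
    binomialTransform (binomialHead k c) a = binomialTransform c (Finsupp.cons k a) := by
  unfold binomialTransform binomialHead
  rw [Finsupp.sum_sum_index (fun _ => zero_mul _) (fun _ _ _ => add_mul _ _ _)]
  refine Finsupp.sum_congr fun b _ => ?_
  rw [Finsupp.sum_single_index (zero_mul _), Fin.prod_univ_succ]
  simp only [Finsupp.cons_zero, Finsupp.cons_succ, Finsupp.tail_apply]
  ring

theorem binomialHead_apply (k : ℕ) (c : (Fin (n + 1) →₀ ℕ) →₀ R) (m : Fin n →₀ ℕ) :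
    binomialHead k c m = ∑ b ∈ c.support with b.tail = m, (b 0).choose k * c b := by
  simp only [binomialHead, Finsupp.sum_apply, Finsupp.single_apply, Finset.sum_filter]
  rfl

theorem support_binomialHead_subset (k : ℕ) (c : (Fin (n + 1) →₀ ℕ) →₀ R) :
    (binomialHead k c).support ⊆ c.support.image Finsupp.tail := by
  intro m hm
  rw [Finsupp.mem_support_iff, binomialHead_apply] at hm
  obtain ⟨b, hb, -⟩ := Finset.exists_ne_zero_of_sum_ne_zero hm
  simp only [mem_filter] at hb
  exact mem_image.2 ⟨b, hb⟩

theorem binomialHead_apply_tail_of_forall {k : ℕ} {c : (Fin (n + 1) →₀ ℕ) →₀ R}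
    {b : Fin (n + 1) →₀ ℕ}
    (hb : ∀ b' ∈ c.support, b' ≠ b → b'.tail = b.tail → (b' 0).choose k = 0) :
    binomialHead k c b.tail = (b 0).choose k * c b := by
  rw [binomialHead_apply, Finset.sum_eq_single b]
  · intro b' hb' hne
    rw [mem_filter] at hb'
    rw [hb b' hb'.1 hne hb'.2, Nat.cast_zero, zero_mul]
  · intro hnb
    rw [Finsupp.notMem_support_iff.1 fun h => hnb (mem_filter.2 ⟨h, rfl⟩), mul_zero]

theorem binomialHead_sup_ne_zero {c : (Fin (n + 1) →₀ ℕ) →₀ R} (hc : c ≠ 0) :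
    binomialHead (c.support.sup (· 0)) c ≠ 0 := by
  obtain ⟨b, hb, hbk⟩ := Finset.exists_mem_eq_sup _ (Finsupp.support_nonempty_iff.2 hc) (· 0)
  refine Finsupp.ne_iff.2 ⟨b.tail, ?_⟩
  have hlt : ∀ b' ∈ c.support, b' ≠ b → b'.tail = b.tail → b' 0 < b 0 := fun b' hb' hne htail =>
    lt_of_le_of_ne (hbk ▸ Finset.le_sup (f := (· 0)) hb') fun h0 =>
      hne (by rw [← Finsupp.cons_tail b', ← Finsupp.cons_tail b, h0, htail])
  rw [hbk, binomialHead_apply_tail_of_forall fun b' hb' hne htail =>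
    Nat.choose_eq_zero_of_lt (hlt b' hb' hne htail)]
  simpa using Finsupp.mem_support_iff.1 hb

theorem exists_ne_tail_eq_of_binomialHead_zero_eq_zero {c : (Fin (n + 1) →₀ ℕ) →₀ R}
    (h : binomialHead 0 c = 0) {b : Fin (n + 1) →₀ ℕ} (hb : b ∈ c.support) :
    ∃ b' ∈ c.support, b' ≠ b ∧ b'.tail = b.tail := by
  by_contra! hunique
  have := binomialHead_apply_tail_of_forall (k := 0) fun b' hb' hne htail =>
    absurd htail (hunique b' hb' hne)
  simp only [h, Finsupp.coe_zero, Pi.zero_apply, Nat.choose_zero_right, Nat.cast_one,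
    one_mul] at this
  exact Finsupp.mem_support_iff.1 hb this.symm

theorem two_mul_card_image_tail_le {c : (Fin (n + 1) →₀ ℕ) →₀ R}
    (h : binomialHead 0 c = 0) : 2 * #(c.support.image Finsupp.tail) ≤ #c.support := by
  refine mul_card_image_le_card _ _ fun m hm => ?_
  obtain ⟨b, hb, rfl⟩ := mem_image.1 hm
  obtain ⟨b', hb', hne, htail⟩ := exists_ne_tail_eq_of_binomialHead_zero_eq_zero h hb
  exact one_lt_card.2 ⟨b', mem_filter.2 ⟨hb', htail⟩, b, mem_filter.2 ⟨hb, rfl⟩, hne⟩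

theorem exists_card_support_lt_binomialTransform_ne_zero :
    ∀ {n : ℕ} {c : (Fin n →₀ ℕ) →₀ R} {ℓ : ℕ}, c ≠ 0 → #c.support < 2 ^ ℓ →
      ∃ a : Fin n →₀ ℕ, #a.support < ℓ ∧ binomialTransform c a ≠ 0
  | 0, c, ℓ, hc, hcard => by
    have hℓ : ℓ ≠ 0 := by
      rintro rfl
      rw [pow_zero, Nat.lt_one_iff, card_eq_zero, Finsupp.support_eq_empty] at hcard
      exact hc hcard
    refine ⟨0, by rw [Finsupp.support_zero, card_empty]; omega, ?_⟩
    rw [Finsupp.unique_single c, binomialTransform,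
      Finsupp.sum_single_index (zero_mul _), Fin.prod_univ_zero, mul_one]
    exact fun h => hc (by rw [Finsupp.unique_single c, h, Finsupp.single_zero])
  | n + 1, c, ℓ, hc, hcard => by
    by_cases h0 : binomialHead 0 c = 0
    · set k := c.support.sup (· 0)
      have hk : binomialHead k c ≠ 0 := binomialHead_sup_ne_zero hc
      have hk0 : k ≠ 0 := fun hk0 => hk (hk0 ▸ h0)
      have hcard' : #(binomialHead k c).support < 2 ^ (ℓ - 1) := by
        have := card_le_card (support_binomialHead_subset k c)
        have := two_mul_card_image_tail_le h0
        have : 2 ^ ℓ ≤ 2 * 2 ^ (ℓ - 1) := by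
          rw [← pow_succ']
          exact Nat.pow_le_pow_right two_pos (by omega)
        omega
      obtain ⟨a, ha, hne⟩ := exists_card_support_lt_binomialTransform_ne_zero hk hcard'
      refine ⟨Finsupp.cons k a, ?_, by rwa [← binomialTransform_binomialHead]⟩
      have := Finsupp.card_support_cons_le k a
      omega
    · obtain ⟨a, ha, hne⟩ := exists_card_support_lt_binomialTransform_ne_zero h0
        (((card_le_card (support_binomialHead_subset 0 c)).trans card_image_le).trans_lt hcard)
      exact ⟨Finsupp.cons 0 a, (Finsupp.card_support_cons_zero_le a).trans_lt ha,
        by rwa [← binomialTransform_binomialHead]⟩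

end BinomialTransform

theorem transfer_matrix_columns_linearIndependent_general
    {F : Type*} [Field F] {n d ℓ : ℕ}
    (S : Finset (Fin n →₀ ℕ)) (hS : ∀ b ∈ S, ∀ i, b i ≤ d)
    (hcard : S.card ≤ 2 ^ ℓ - 1) :
    LinearIndependent F
      (fun b : S =>
        fun a : {a : Fin n →₀ ℕ // (∀ i, a i ≤ d) ∧ a.support.card < ℓ} =>
          ((∏ i, Nat.choose (b.1 i) (a.1 i) : ℕ) : F)) := by
  rw [linearIndependent_iff]
  intro l hl
  by_contra hl0
  set c := l.mapDomain Subtype.val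
  have hc : c ≠ 0 := fun h => hl0 <| Finsupp.mapDomain_injective Subtype.val_injective <|
    h.trans Finsupp.mapDomain_zero.symm
  have hcS : c.support ⊆ S := Finsupp.mapDomain_support.trans fun b hb => by
    obtain ⟨b, -, rfl⟩ := mem_image.1 hb
    exact b.2
  obtain ⟨a, ha, hne⟩ := exists_card_support_lt_binomialTransform_ne_zero hc
    ((card_le_card hcS).trans_lt (Nat.lt_of_le_sub_one (Nat.two_pow_pos ℓ) hcard))
  have had : ∀ i, a i ≤ d := by
    by_contra! ⟨i, hi⟩
    exact hne (binomialTransform_eq_zero_of_forall_exists_lt fun b hb =>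
      ⟨i, (hS b (hcS hb) i).trans_lt hi⟩)
  refine hne ?_
  have := congrFun hl ⟨a, had, ha⟩
  rw [binomialTransform,
    Finsupp.sum_mapDomain_index (fun _ => zero_mul _) (fun _ _ _ => add_mul _ _ _)]
  simpa [Finsupp.linearCombination_apply, Finsupp.sum, Finset.sum_apply] using this

/-- Lemma 5.3 of the paper, transfer matrix: let `T_ℓ` be the `M_ℓ × M`
matrix whose entry at row `a` and column `b` is `∏ᵢ C(bᵢ, aᵢ)`, where `M = {0,…,d}^n` and
`M_ℓ ⊆ M` are the exponents of support `< ℓ`. Then any `≤ 2^ℓ - 1` columns of `T_ℓ` are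
`F`-linearly independent. -/
theorem transfer_matrix_columns_linearIndependent
    {F : Type*} [Field F] {n d ℓ : ℕ} (hn : 1 ≤ n) (hd : 1 ≤ d) (hl : 1 ≤ ℓ)
    (S : Finset (Fin n →₀ ℕ)) (hS : ∀ b ∈ S, ∀ i, b i ≤ d)
    (hcard : S.card ≤ 2 ^ ℓ - 1) :
    LinearIndependent F
      (fun b : S =>
        fun a : {a : Fin n →₀ ℕ // (∀ i, a i ≤ d) ∧ a.support.card < ℓ} =>
          ((∏ i, Nat.choose (b.1 i) (a.1 i) : ℕ) : F)) :=
  transfer_matrix_columns_linearIndependent_general S hS hcard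
end

section
/- Let F be a field, A an m×m' matrix polynomial in F[x_1,…,x_n], and {f_1(t),…,f_N(t)} ⊆ F[t]^n a finite family of n-tuples of univariate polynomials. Let α_1,…,α_N be distinct elements of F, and let L(y,t) ∈ F[y,t]^n be the Lagrange interpolation of the family: L_j = Σ_{i∈[N]} f_{i,j}(t)·∏_{i'≠i} (y − α_{i'})/(α_i − α_{i'}), so that L(α_i, t) = f_i(t) for each i. If there exists i ∈ [N] such that A(x + f_i(t)) is ℓ-concentrated over F(t), then A(x + L(y,t)) is ℓ-concentrated over the rational function field F(y,t). -/
open MvPolynomial Matrix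

/-!
Over `K = F(t)` put `g = L(y, t) ∈ K[y]ⁿ`, and let `P_b ∈ K[y]^{m×m'}` be the coefficient
of `x^b` in `A(x + g(y))`. Specialising `y = αᵢ` gives the coefficients of `A(x + fᵢ(t))`
over `K`, mapping into `K(y)` gives those of `A(x + L(y, t))`. Shifts are invertible, so in
both cases the coefficients span the same space as the coefficients of `A` itself, whose
dimension `r` over `K` bounds its dimension over `K(y)`. Concentration at `y = αᵢ` yields `r`
low-support coefficients that are independent over `K`; their lifts `P_b` are independent over
`K[y]`, hence over `K(y)`, so the low-support coefficients of `A(x + L)` already span everything.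
-/

open scoped Polynomial

open Submodule Set

section CoefficientSpan

variable {σ m n R : Type*} [Fintype m] [Fintype n]

theorem span_range_coeff_map_le [CommSemiring R] {τ Φ : Type*}
    [FunLike Φ (MvPolynomial σ R) (MvPolynomial τ R)] [LinearMapClass Φ R _ _] (φ : Φ)
    (Q : Matrix m n (MvPolynomial σ R)) :
    span R (range fun a => (Q.map φ).map (coeff a)) ≤
      span R (range fun b => Q.map (coeff b)) := by
  classical
  refine span_le.2 (range_subset_iff.2 fun a => ?_)
  let T := Finset.univ.biUnion fun rc : m × n => (Q rc.1 rc.2).support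
  have hQ (r : m) (c : n) : Q r c = ∑ b ∈ T, monomial b ((Q r c).coeff b) :=
    (Q r c).as_sum.trans <| Finset.sum_subset
      (fun b hb => Finset.mem_biUnion.2 ⟨(r, c), Finset.mem_univ _, hb⟩)
      fun b _ hb => by rw [notMem_support_iff.1 hb, monomial_zero]
  have hexpand :
      (Q.map φ).map (coeff a) = ∑ b ∈ T, (φ (monomial b 1)).coeff a • Q.map (coeff b) := by
    refine Matrix.ext fun r c => ?_
    simp only [Matrix.map_apply, Matrix.sum_apply, Matrix.smul_apply, smul_eq_mul]
    conv_lhs => rw [hQ r c]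
    simp only [map_sum, coeff_sum]
    refine Finset.sum_congr rfl fun b _ => ?_
    rw [show monomial b ((Q r c).coeff b) = (Q r c).coeff b • monomial b 1 by
      rw [smul_monomial, smul_eq_mul, mul_one], map_smul, coeff_smul, smul_eq_mul, mul_comm]
  rw [hexpand]
  exact sum_mem fun b _ => smul_mem _ _ (subset_span (mem_range_self b))

theorem span_range_coeff_shift [CommRing R] (c : σ → R) (Q : Matrix m n (MvPolynomial σ R)) :
    span R (range fun a => (Q.map (aeval fun j => X j + C (c j))).map (coeff a)) =
      span R (range fun b => Q.map (coeff b)) := by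
  have hinv : (aeval fun j => X j + C (-c j) : MvPolynomial σ R →ₐ[R] _).comp
      (aeval fun j => X j + C (c j)) = AlgHom.id R _ := by
    refine algHom_ext fun j => ?_
    simp only [AlgHom.comp_apply, aeval_X, map_add, aeval_C, algebraMap_eq, map_neg,
      AlgHom.id_apply]
    ring
  refine le_antisymm (span_range_coeff_map_le (aeval fun j => X j + C (c j)) Q) ?_
  have h := span_range_coeff_map_le
    (aeval fun j => X j + C (-c j) : MvPolynomial σ R →ₐ[R] MvPolynomial σ R)
    (Q.map (aeval fun j => X j + C (c j)))
  rwa [Matrix.map_map, ← AlgHom.coe_comp, hinv] at h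

end CoefficientSpan

section Shift

variable {σ m n F R : Type*}

noncomputable def shiftCoeff [CommSemiring F] [CommSemiring R] [Algebra F R]
    (A : Matrix m n (MvPolynomial σ F)) (c : σ → R) (b : σ →₀ ℕ) : Matrix m n R :=
  (A.map (aeval fun j => X j + C (c j))).map (coeff b)

theorem shiftCoeff_algHom_comp [CommSemiring F] [CommSemiring R] [Algebra F R] {R' : Type*}
    [CommSemiring R'] [Algebra F R'] (ψ : R →ₐ[F] R') (A : Matrix m n (MvPolynomial σ F))
    (c : σ → R) (b : σ →₀ ℕ) :
    shiftCoeff A (fun j => ψ (c j)) b = (shiftCoeff A c b).map ψ := by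
  refine Matrix.ext fun r s => ?_
  simp only [shiftCoeff, Matrix.map_apply]
  rw [show ψ (coeff b _) = coeff b (mapAlgHom ψ _) from (coeff_map _ _ _).symm, comp_aeval_apply]
  simp

theorem span_range_shiftCoeff [Fintype m] [Fintype n] [CommRing F] [CommRing R] [Algebra F R]
    (A : Matrix m n (MvPolynomial σ F)) (c : σ → R) :
    span R (range (shiftCoeff A c)) =
      span R (range fun b => (A.map (coeff b)).map (algebraMap F R)) := by
  let Q := A.map (MvPolynomial.map (algebraMap F R))
  have hshift :
      shiftCoeff A c = fun b => (Q.map (aeval fun j => X j + C (c j))).map (coeff b) := by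
    funext b
    refine Matrix.ext fun r s => ?_
    simp only [shiftCoeff, Q, Matrix.map_apply, aeval_map_algebraMap]
  have hcoeff : (fun b => (A.map (coeff b)).map (algebraMap F R)) = fun b => Q.map (coeff b) := by
    funext b
    refine Matrix.ext fun r s => ?_
    simp [Q, coeff_map]
  rw [hshift, hcoeff, span_range_coeff_shift]

end Shift

section Rank

variable {ι m n : Type*}

theorem finrank_span_range_map_le [Fintype m] [Fintype n] {K E : Type*} [Field K] [Field E]
    (h : K →+* E) (u : ι → Matrix m n K) :
    Module.finrank E (span E (range fun i => (u i).map h)) ≤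
      Module.finrank K (span K (range u)) := by
  obtain ⟨κ, b, -, hspan, hli⟩ := exists_linearIndependent' K u
  have : Fintype κ := @Fintype.ofFinite _ hli.finite
  let Φ : Matrix m n K →ₛₗ[h] Matrix m n E := h.toSemilinearMap.mapMatrix
  calc Module.finrank E (span E (range (Φ ∘ u)))
      ≤ Module.finrank E (span E (range (Φ ∘ u ∘ b))) := by
        refine finrank_mono (span_le.2 (range_subset_iff.2 fun i => ?_))
        rw [range_comp Φ]
        exact image_span_subset_span Φ _ ⟨u i, hspan ▸ subset_span (mem_range_self i), rfl⟩
    _ ≤ Fintype.card κ := finrank_range_le_card _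
    _ = Module.finrank K (span K (range u)) := by rw [← hspan, finrank_span_eq_card hli]

open Polynomial in
theorem LinearIndependent.of_map_eval {K : Type*} [CommRing K] [IsDomain K] (a : K)
    {v : ι → Matrix m n K[X]}
    (hv : LinearIndependent K fun i => (v i).map (eval a)) : LinearIndependent K[X] v := by
  let ev : Matrix m n K[X] →ₛₗ[evalRingHom a] Matrix m n K :=
    (evalRingHom a).toSemilinearMap.mapMatrix
  rw [linearIndependent_iff'] at hv ⊢
  intro s g hg i hi
  -- A relation over `K[X]` specialises to one over `K`, so all its coefficients vanish at `a`
  -- and may be divided by `X - a`; hence they are divisible by every power of `X - a`.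
  suffices hdvd : ∀ k (g : ι → K[X]), ∑ i ∈ s, g i • v i = 0 →
      ∀ i ∈ s, (Polynomial.X - Polynomial.C a) ^ k ∣ g i from
    eq_zero_of_dvd_of_natDegree_lt (hdvd ((g i).natDegree + 1) g hg i hi) (by simp)
  intro k
  induction k with
  | zero => simp
  | succ k ih =>
    intro g hg i hi
    have hroot : ∀ i ∈ s, (g i).IsRoot a := by
      refine hv s (fun i => (g i).eval a) ?_
      simpa [ev, map_sum] using congrArg ev hg
    have hquot : ∑ i ∈ s, (g i /ₘ (Polynomial.X - Polynomial.C a)) • v i = 0 := by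
      refine Matrix.ext fun r c => ?_
      have hrc : (Polynomial.X - Polynomial.C a) *
          ∑ i ∈ s, g i /ₘ (Polynomial.X - Polynomial.C a) * v i r c = 0 := by
        simp_rw [Finset.mul_sum, ← mul_assoc]
        rw [Finset.sum_congr rfl fun i hi => by rw [mul_divByMonic_eq_iff_isRoot.2 (hroot i hi)]]
        simpa [Matrix.sum_apply] using congr_fun₂ hg r c
      simpa [Matrix.sum_apply] using (mul_eq_zero.1 hrc).resolve_left (X_sub_C_ne_zero a)
    rw [← mul_divByMonic_eq_iff_isRoot.2 (hroot i hi), pow_succ']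
    exact mul_dvd_mul_left _ (ih _ hquot i hi)

theorem LinearIndependent.map_ratFunc_of_map_eval {K : Type*} [CommRing K] [IsDomain K] (a : K)
    {v : ι → Matrix m n K[X]}
    (hv : LinearIndependent K fun i => (v i).map (Polynomial.eval a)) :
    LinearIndependent (RatFunc K) fun i => (v i).map (algebraMap K[X] (RatFunc K)) :=
  (LinearIndependent.iff_fractionRing K[X] (RatFunc K)).1 <|
    (LinearIndependent.of_map_eval a hv).map' (Algebra.linearMap K[X] (RatFunc K)).mapMatrix
      (LinearMap.ker_eq_bot.2 (Matrix.map_injective (IsFractionRing.injective K[X] (RatFunc K))))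

theorem finrank_span_range_map_eval_le [Fintype m] [Fintype n] {K : Type*} [Field K]
    (a : K) (v : ι → Matrix m n K[X]) :
    Module.finrank K (span K (range fun i => (v i).map (Polynomial.eval a))) ≤
      Module.finrank (RatFunc K)
        (span (RatFunc K) (range fun i => (v i).map (algebraMap K[X] (RatFunc K)))) := by
  obtain ⟨κ, b, -, hspan, hli⟩ :=
    exists_linearIndependent' K fun i => (v i).map (Polynomial.eval a)
  have : Fintype κ := @Fintype.ofFinite _ hli.finite
  have hli' := LinearIndependent.map_ratFunc_of_map_eval (v := v ∘ b) a hli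
  rw [← hspan, finrank_span_eq_card hli, ← finrank_span_eq_card hli']
  exact finrank_mono (span_mono (range_comp_subset_range b
    fun i => (v i).map (algebraMap K[X] (RatFunc K))))

end Rank

theorem mem_span_shiftCoeff_ratFunc_of_eval {σ m n F K : Type*} [Fintype m] [Fintype n]
    [CommRing F] [Field K] [Algebra F K] (A : Matrix m n (MvPolynomial σ F)) (g : σ → K[X])
    (a : K) (S : Set (σ →₀ ℕ))
    (h : ∀ b, shiftCoeff A (fun j => (g j).eval a) b ∈
      span K (shiftCoeff A (fun j => (g j).eval a) '' S)) (b : σ →₀ ℕ) :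
    shiftCoeff A (fun j => algebraMap K[X] (RatFunc K) (g j)) b ∈
      span (RatFunc K) (shiftCoeff A (fun j => algebraMap K[X] (RatFunc K) (g j)) '' S) := by
  set c₁ := fun j => (g j).eval a
  set c₂ := fun j => algebraMap K[X] (RatFunc K) (g j)
  have h₁ : shiftCoeff A c₁ = fun b => (shiftCoeff A g b).map (Polynomial.eval a) :=
    funext (shiftCoeff_algHom_comp ((Polynomial.aeval a).restrictScalars F) A g)
  have h₂ : shiftCoeff A c₂ = fun b => (shiftCoeff A g b).map (algebraMap K[X] (RatFunc K)) :=
    funext (shiftCoeff_algHom_comp (IsScalarTower.toAlgHom F K[X] (RatFunc K)) A g)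
  have hspan₁ : span K (shiftCoeff A c₁ '' S) = span K (range (shiftCoeff A c₁)) :=
    le_antisymm (span_mono (image_subset_range _ _)) (span_le.2 (range_subset_iff.2 h))
  have hupper : Module.finrank (RatFunc K) (span (RatFunc K) (range (shiftCoeff A c₂))) ≤
      Module.finrank K (span K (range (shiftCoeff A c₁))) := by
    rw [span_range_shiftCoeff, span_range_shiftCoeff]
    have htower :
        (fun b => ((A.map (coeff b)).map (algebraMap F K)).map (algebraMap K (RatFunc K))) =
          fun b => (A.map (coeff b)).map (algebraMap F (RatFunc K)) := by
      funext b
      rw [Matrix.map_map, ← RingHom.coe_comp, ← IsScalarTower.algebraMap_eq]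
    exact htower ▸ finrank_span_range_map_le (algebraMap K (RatFunc K))
      fun b => (A.map (coeff b)).map (algebraMap F K)
  have hlower : Module.finrank K (span K (shiftCoeff A c₁ '' S)) ≤
      Module.finrank (RatFunc K) (span (RatFunc K) (shiftCoeff A c₂ '' S)) := by
    rw [h₁, h₂, image_eq_range, image_eq_range]
    exact finrank_span_range_map_eval_le a fun b : S => shiftCoeff A g b
  have hspan₂ := eq_of_le_of_finrank_le (span_mono (image_subset_range _ S))
    (hupper.trans (hspan₁ ▸ hlower))
  rw [hspan₂]
  exact subset_span (mem_range_self b)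

theorem map_sum_C_mul_prod_eq_interpolate {F K ι : Type*} [Field F] [Field K] [Fintype ι]
    [DecidableEq ι] (φ : F[X] →+* K) (α : ι → F) (v : ι → F[X]) :
    (∑ i, Polynomial.C (v i) * ∏ i' ∈ Finset.univ.erase i,
        (Polynomial.C (Polynomial.C (α i - α i')⁻¹) *
          (Polynomial.X - Polynomial.C (Polynomial.C (α i'))))).map φ =
      Lagrange.interpolate Finset.univ (fun i => φ (Polynomial.C (α i))) (fun i => φ (v i)) := by
  have hinv (y : F) : φ (Polynomial.C y⁻¹) = (φ (Polynomial.C y))⁻¹ :=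
    map_inv₀ (φ.comp Polynomial.C) y
  simp [Lagrange.interpolate_apply, Lagrange.basis, Lagrange.basisDivisor, Polynomial.map_sum,
    Polynomial.map_prod, Polynomial.map_sub, hinv]

/-- Lemma 5.5 of the paper, Lagrange interpolation of a family of shifts:
let `L(y,t) ∈ F[y,t]^n` be the Lagrange interpolation of the family `f₁(t), …, f_N(t)`, i.e.
`L_j = ∑ᵢ f_{i,j}(t) ∏_{i'≠i} (y - α_{i'})/(α_i - α_{i'})`. If for some `i` the shifted matrix
polynomial `A(x + fᵢ(t))` is `ℓ`-concentrated over `F(t)`, then `A(x + L(y,t))` is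
`ℓ`-concentrated over `F(y,t)`. Here `F[y,t]` is encoded as `Polynomial (Polynomial F)` with
`y` the outer and `t` the inner variable, and `F(y,t)` as `RatFunc (RatFunc F)`. -/
theorem lagrange_interpolation_preserves_concentration
    {F : Type*} [Field F] {n m m' N : ℕ}
    (A : Matrix (Fin m) (Fin m') (MvPolynomial (Fin n) F))
    (f : Fin N → Fin n → Polynomial F)
    (α : Fin N → F) (hα : Function.Injective α)
    (ℓ : ℕ)
    (L : Fin n → Polynomial (Polynomial F))
    (hL : ∀ j, L j = ∑ i, Polynomial.C (f i j) *
      ∏ i' ∈ Finset.univ.erase i,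
        (Polynomial.C (Polynomial.C ((α i - α i')⁻¹)) *
          (Polynomial.X - Polynomial.C (Polynomial.C (α i')))))
    (hconc : ∃ i, Concentrated (RatFunc F) ℓ
      (fun a => Matrix.of fun r c => (shiftBy (f i) (A r c)).coeff a)) :
    Concentrated (RatFunc (RatFunc F)) ℓ
      (fun a => Matrix.of fun r c => (shiftBy₂ L (A r c)).coeff a) := by
  obtain ⟨i, hconc⟩ := hconc
  let φ := algebraMap (Polynomial F) (RatFunc F)
  have hnode : Set.InjOn (fun i => φ (Polynomial.C (α i))) (Finset.univ : Finset (Fin N)) :=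
    ((φ.comp Polynomial.C).injective.comp hα).injOn
  have hL_node :
      (fun j => ((L j).map φ).eval (φ (Polynomial.C (α i)))) = fun j => φ (f i j) := by
    funext j
    rw [hL j, map_sum_C_mul_prod_eq_interpolate,
      Lagrange.eval_interpolate_at_node _ hnode (Finset.mem_univ i)]
  -- Both `Concentrated` families are `shiftCoeff` families by unfolding `shiftBy`, `shiftBy₂`.
  refine mem_span_shiftCoeff_ratFunc_of_eval A (fun j => (L j).map φ)
    (φ (Polynomial.C (α i))) _ ?_
  rw [hL_node]
  exact hconc
end

section
/- Let F be an infinite field and fix integers n, d, w, ℓ ≥ 1. Suppose f_1(t),…,f_N(t) ∈ F[t]^n is a finite family of n-tuples of univariate polynomials such that for every matrix polynomial A ∈ F^{w×w}[x_1,…,x_n] of individual degree at most d computed by an ROABP of width w (in any variable order), there exists i ∈ [N] for which A(x + f_i(t)) is ℓ-concentrated over F(t). Then there exists a single n-tuple g(t) ∈ F[t]^n such that for every matrix polynomial A ∈ F^{w×w}[x_1,…,x_n] of individual degree at most d computed by an ROABP of width w (in any variable order), A(x + g(t)) is ℓ-concentrated over F(t). -/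
open MvPolynomial Matrix

/-!
Fix `A` and a member `f i` of the family for which `A(x + f i)` is `ℓ`-concentrated. For every
shift `h` the coefficients of `A(x + h)` lie in the span `V` of those of `A(x + f i)`, and
concentration provides exponents `β` of support `< ℓ` whose coefficients at `f i` form a basis
of `V`. The coefficient of `x^b` in `A(x + h)` is `(D^b A)(h)` for the Hasse derivative `D^b`,
so the `β`-coefficients are linearly independent, hence again a basis of `V`, at every `h`
where a maximal minor `Q` of these Hasse derivatives does not vanish; `Q` has degree
`≤ w² · n d` and `Q(f i) ≠ 0`. It remains to find one `g` with `Q(g) ≠ 0` for every polynomial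
`Q` of that degree that does not vanish at some `f i`. Interpolating the family at distinct
points `c_i ∈ F` gives `G(y, t) = ∑ L_i(y) f_i(t)` with `Q(G) ≠ 0`, since `G(c_i, t) = f_i(t)`;
the Kronecker substitution `y = t^M`, with `M` larger than the `t`-degree of `Q(G)`, keeps it
nonzero, so `g(t) = G(t^M, t)` works.
-/

open scoped Polynomial

theorem LinearIndependent.exists_det_submatrix_ne_zero {K ι κ : Type*} [Field K] [Fintype ι]
    [Fintype κ] [DecidableEq κ] {v : κ → ι → K} (hv : LinearIndependent K v) :
    ∃ e : κ → ι, ((Matrix.of v).submatrix id e).det ≠ 0 := by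
  obtain ⟨κ', a, ha, hspan, hli⟩ := exists_linearIndependent' K (Matrix.of v).col
  have hrank : Module.finrank K (Submodule.span K (Set.range (Matrix.of v).col)) =
      Fintype.card κ := by
    rw [← Matrix.rank_eq_finrank_span_cols]
    exact hv.rank_matrix
  have : Finite κ' := Finite.of_injective a ha
  have := Fintype.ofFinite κ'
  have hcard : Fintype.card κ = Fintype.card κ' := by
    rw [← hrank, ← hspan, finrank_span_eq_card hli]
  let ε := Fintype.equivOfCardEq hcard
  refine ⟨a ∘ ε, fun h => ?_⟩
  have : LinearIndependent K ((Matrix.of v).submatrix id (a ∘ ε)).col :=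
    hli.comp ε ε.injective
  rw [Matrix.linearIndependent_cols_iff_isUnit, Matrix.isUnit_iff_isUnit_det, h] at this
  exact not_isUnit_zero this

theorem linearIndependent_of_det_submatrix_ne_zero {K ι κ : Type*} [Field K] [Fintype κ]
    [DecidableEq κ] {v : κ → ι → K} (e : κ → ι) (he : ((Matrix.of v).submatrix id e).det ≠ 0) :
    LinearIndependent K v := by
  have : LinearIndependent K ((Matrix.of v).submatrix id e).row := by
    rw [Matrix.linearIndependent_rows_iff_isUnit, Matrix.isUnit_iff_isUnit_det]
    exact he.isUnit
  exact LinearIndependent.of_comp (LinearMap.funLeft K K e) this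

theorem Matrix.linearIndependent_of_curry_iff {K ι ι' κ : Type*} [Ring K]
    (v : κ → ι × ι' → K) :
    LinearIndependent K (fun k => Matrix.of fun r c => v k (r, c)) ↔ LinearIndependent K v := by
  let U : (ι × ι' → K) →ₗ[K] Matrix ι ι' K :=
    LinearMap.pi fun r => LinearMap.pi fun c => LinearMap.proj (r, c)
  have hU : LinearMap.ker U = ⊥ := LinearMap.ker_eq_bot.2 fun x y hxy =>
    funext fun q => congrFun (congrFun hxy q.1) q.2
  exact U.linearIndependent_iff hU

section Concentration

variable {K V : Type*} [Field K] [AddCommGroup V] [Module K V] [FiniteDimensional K V] {n ℓ : ℕ}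
  {cf : (Fin n →₀ ℕ) → V}

theorem Concentrated.exists_linearIndependent (h : Concentrated K ℓ cf) :
    ∃ (κ : Type) (_ : Fintype κ) (β : κ → Fin n →₀ ℕ), (∀ k, (β k).support.card < ℓ) ∧
      LinearIndependent K (cf ∘ β) ∧
      Submodule.span K (Set.range (cf ∘ β)) = Submodule.span K (Set.range cf) := by
  obtain ⟨κ, a, -, hspan, hli⟩ :=
    exists_linearIndependent' K fun b : {b : Fin n →₀ ℕ // b.support.card < ℓ} => cf b
  have : Finite κ := hli.finite
  refine ⟨κ, Fintype.ofFinite κ, fun k => (a k).1, fun k => (a k).2, hli, ?_⟩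
  refine hspan.trans (le_antisymm (Submodule.span_mono ?_) (Submodule.span_le.2 ?_))
  · rintro _ ⟨b, rfl⟩
    exact ⟨b, rfl⟩
  · rintro _ ⟨a, rfl⟩
    exact Set.image_eq_range cf {b | b.support.card < ℓ} ▸ h a

theorem concentrated_of_linearIndependent {U : Submodule K V} (hU : ∀ a, cf a ∈ U)
    {κ : Type*} [Fintype κ] {β : κ → Fin n →₀ ℕ} (hβ : ∀ k, (β k).support.card < ℓ)
    (hli : LinearIndependent K (cf ∘ β)) (hrank : Module.finrank K U ≤ Fintype.card κ) :
    Concentrated K ℓ cf := by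
  intro a
  have hle : Submodule.span K (Set.range (cf ∘ β)) ≤ U :=
    Submodule.span_le.2 (Set.range_subset_iff.2 fun k => hU (β k))
  have heq := Submodule.eq_of_le_of_finrank_le hle (by rwa [finrank_span_eq_card hli])
  exact Submodule.span_mono (Set.range_subset_iff.2 fun k => Set.mem_image_of_mem cf (hβ k))
    (heq ▸ hU a)

end Concentration

namespace MvPolynomial

variable {σ τ R : Type*}

theorem totalDegree_det_le [CommRing R] {κ : Type*} [Fintype κ] [DecidableEq κ]
    (M : Matrix κ κ (MvPolynomial σ R)) {D : ℕ} (hM : ∀ i j, (M i j).totalDegree ≤ D) :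
    M.det.totalDegree ≤ Fintype.card κ * D := by
  rw [Matrix.det_apply]
  refine totalDegree_finsetSum_le fun π _ => ?_
  rw [Units.smul_def]
  refine (totalDegree_smul_le _ _).trans ((totalDegree_finsetProd _ _).trans ?_)
  simpa using Finset.sum_le_sum fun i (_ : i ∈ Finset.univ) => hM (π i) i

theorem totalDegree_coeff_mul_le [CommSemiring R] {p q : MvPolynomial σ (MvPolynomial τ R)}
    {a b : ℕ} (hp : ∀ u, (p.coeff u).totalDegree ≤ a) (hq : ∀ u, (q.coeff u).totalDegree ≤ b)
    (u : σ →₀ ℕ) : ((p * q).coeff u).totalDegree ≤ a + b := by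
  classical
  rw [coeff_mul]
  exact totalDegree_finsetSum_le fun x _ =>
    (totalDegree_mul _ _).trans (add_le_add (hp _) (hq _))

theorem totalDegree_coeff_multiset_prod_le [CommSemiring R]
    (s : Multiset (MvPolynomial σ (MvPolynomial τ R))) {a : ℕ}
    (hs : ∀ p ∈ s, ∀ u, (p.coeff u).totalDegree ≤ a) (u : σ →₀ ℕ) :
    (s.prod.coeff u).totalDegree ≤ Multiset.card s * a := by
  classical
  induction s using Multiset.induction_on generalizing u with
  | empty =>
    rw [Multiset.prod_zero, coeff_one]
    split_ifs <;> simp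
  | cons p s ih =>
    rw [Multiset.prod_cons, Multiset.card_cons, add_one_mul, add_comm]
    exact totalDegree_coeff_mul_le (hs p (Multiset.mem_cons_self p s))
      (ih fun q hq => hs q (Multiset.mem_cons_of_mem hq)) u

/-- The Hasse derivative: `P(x + y) = ∑ b, x^b · (hasseDeriv b P)(y)`. -/
noncomputable def hasseDeriv [CommSemiring R] (b : σ →₀ ℕ) (P : MvPolynomial σ R) :
    MvPolynomial σ R :=
  (aeval (fun j => X j + C (X j)) P : MvPolynomial σ (MvPolynomial σ R)).coeff b

theorem aeval_hasseDeriv [CommSemiring R] {K : Type*} [CommSemiring K] [Algebra R K]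
    (h : σ → K) (b : σ →₀ ℕ) (P : MvPolynomial σ R) :
    aeval h (hasseDeriv b P) = (aeval (fun j => X j + C (h j)) P).coeff b := by
  have : (mapAlgHom (aeval h)).comp (aeval fun j => X j + C (X j)) =
      (aeval fun j => X j + C (h j) : MvPolynomial σ R →ₐ[R] MvPolynomial σ K) :=
    algHom_ext fun j => by simp
  rw [hasseDeriv, ← this, AlgHom.comp_apply, mapAlgHom_apply, coeff_map]
  rfl

theorem totalDegree_hasseDeriv_le [CommSemiring R] (b : σ →₀ ℕ) (P : MvPolynomial σ R) :
    (hasseDeriv b P).totalDegree ≤ P.totalDegree := by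
  classical
  conv_lhs => rw [hasseDeriv, P.as_sum, map_sum, coeff_sum]
  refine totalDegree_finsetSum_le fun m hm => ?_
  have hprod : (m.prod fun j k => (X j + C (X j)) ^ k) =
      (m.toMultiset.map fun j => (X j + C (X j) : MvPolynomial σ (MvPolynomial σ R))).prod := by
    rw [Finsupp.toMultiset_map, Finsupp.prod_toMultiset,
      Finsupp.prod_mapDomain_index pow_zero pow_add]
  rw [aeval_monomial, algebraMap_apply, coeff_C_mul, hprod]
  refine (totalDegree_mul _ _).trans ?_
  rw [algebraMap_eq, totalDegree_C, zero_add]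
  refine (totalDegree_coeff_multiset_prod_le _ (a := 1) ?_ b).trans ?_
  · simp only [Multiset.mem_map, Finsupp.mem_toMultiset, forall_exists_index, and_imp]
    rintro _ j - rfl u
    rw [coeff_add, coeff_X, coeff_C]
    refine (totalDegree_add _ _).trans (max_le ?_ ?_)
    · split_ifs <;> simp
    · split_ifs
      · exact (totalDegree_monomial_le (Finsupp.single j 1) 1).trans (by simp)
      · simp
  · simpa [Finsupp.card_toMultiset, Finsupp.sum] using le_totalDegree hm

end MvPolynomial

theorem LinearIndependent.exists_certificate {F K σ ι κ : Type*} [CommRing F] [Field K]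
    [Algebra F K] [Fintype ι] [Fintype κ] [DecidableEq κ] (P : κ → ι → MvPolynomial σ F)
    {D : ℕ} (hP : ∀ k q, (P k q).totalDegree ≤ D) {x₀ : σ → K}
    (h₀ : LinearIndependent K fun k q => aeval x₀ (P k q)) :
    ∃ Q : MvPolynomial σ F, Q.totalDegree ≤ Fintype.card ι * D ∧ aeval x₀ Q ≠ 0 ∧
      ∀ x : σ → K, aeval x Q ≠ 0 → LinearIndependent K fun k q => aeval x (P k q) := by
  obtain ⟨e, he⟩ := h₀.exists_det_submatrix_ne_zero
  have hcard : Fintype.card κ ≤ Fintype.card ι := by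
    simpa using h₀.fintype_card_le_finrank
  refine ⟨((Matrix.of P).submatrix id e).det, ?_, ?_, fun x hx => ?_⟩
  · exact (MvPolynomial.totalDegree_det_le _ fun k k' => hP k (e k')).trans
      (Nat.mul_le_mul_right D hcard)
  · rwa [AlgHom.map_det]
  · rw [AlgHom.map_det] at hx
    exact linearIndependent_of_det_submatrix_ne_zero e hx

theorem Polynomial.eval₂_expand_X_ne_zero {R : Type*} [CommRing R] [IsDomain R] {M : ℕ}
    {q : R[X][X]} (hq : q ≠ 0) (hM : q.natDegree < M) :
    q.eval₂ (Polynomial.expand R M : R[X] →+* R[X]) Polynomial.X ≠ 0 := by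
  classical
  have hM0 : 0 < M := (Nat.zero_le _).trans_lt hM
  set term : ℕ → R[X] := fun b => Polynomial.expand R M (q.coeff b) * Polynomial.X ^ b
  have hterm : ∀ b ∈ q.support, term b ≠ 0 ∧
      (term b).natDegree = M * (q.coeff b).natDegree + b := by
    intro b hb
    have hcoeff := Polynomial.mem_support_iff.mp hb
    refine ⟨mul_ne_zero ((Polynomial.expand_ne_zero hM0).mpr hcoeff) (pow_ne_zero _
      Polynomial.X_ne_zero), ?_⟩
    rw [Polynomial.natDegree_mul_X_pow _ ((Polynomial.expand_ne_zero hM0).mpr hcoeff),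
      Polynomial.natDegree_expand, mul_comm]
  have hsum : q.eval₂ (Polynomial.expand R M : R[X] →+* R[X]) Polynomial.X =
      ∑ b ∈ q.support, term b := by
    rw [Polynomial.eval₂_eq_sum, Polynomial.sum_def]
    rfl
  have hdisj : Set.Pairwise {b | b ∈ q.support ∧ term b ≠ 0}
      fun b b' => (term b).degree ≠ (term b').degree := by
    rintro b ⟨hb, -⟩ b' ⟨hb', -⟩ hne hdeg
    apply hne
    simp only [Polynomial.degree_eq_natDegree (hterm _ hb).1,
      Polynomial.degree_eq_natDegree (hterm _ hb').1, (hterm _ hb).2, (hterm _ hb').2,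
      Nat.cast_inj] at hdeg
    have hlt : b < M := (Polynomial.le_natDegree_of_mem_supp b hb).trans_lt hM
    have hlt' : b' < M := (Polynomial.le_natDegree_of_mem_supp b' hb').trans_lt hM
    simpa [Nat.mul_add_mod, Nat.mod_eq_of_lt hlt, Nat.mod_eq_of_lt hlt'] using
      congrArg (· % M) hdeg
  intro h0
  have hb := Polynomial.natDegree_mem_support_of_nonzero hq
  have := Finset.le_sup (f := fun b => (term b).degree) hb
  rw [← Polynomial.degree_sum_eq_of_disjoint term q.support hdisj, ← hsum, h0,
    Polynomial.degree_zero, le_bot_iff, Polynomial.degree_eq_bot] at this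
  exact (hterm _ hb).1 this

theorem exists_forall_aeval_ne_zero_of_exists {F σ ι : Type*} [Field F] [Infinite F]
    [Fintype σ] [Fintype ι] (D : ℕ) (f : ι → σ → F[X]) :
    ∃ g : σ → F[X], ∀ P : MvPolynomial σ F, P.totalDegree ≤ D →
      (∃ i, aeval (f i) P ≠ 0) → aeval g P ≠ 0 := by
  classical
  let v : ι ↪ F := (Fintype.equivFin ι).toEmbedding.trans
    (Fin.valEmbedding.trans (Infinite.natEmbedding F))
  let L : ι → F[X] := Lagrange.basis Finset.univ v
  let T := Finset.univ.sup fun p : ι × σ => (f p.1 p.2).natDegree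
  -- `G j = ∑ i, L i (y) * f i j (t)`, with `t` the outer variable.
  let G : σ → F[X][X] := fun j => ∑ i, Polynomial.C (L i) * (f i j).map Polynomial.C
  have hG : ∀ (χ : F[X] →ₐ[F] F[X]) (P : MvPolynomial σ F),
      Polynomial.aevalTower χ Polynomial.X (aeval G P) =
        aeval (fun j => ∑ i, χ (L i) * f i j) P := by
    intro χ P
    rw [comp_aeval_apply]
    congr! with j
    have hχC : (χ : F[X] →+* F[X]).comp Polynomial.C = Polynomial.C :=
      RingHom.ext χ.commutes
    simp [G, Polynomial.aevalTower, Polynomial.eval₂_map, hχC]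
  refine ⟨fun j => ∑ i, Polynomial.expand F (D * T + 1) (L i) * f i j, fun P hP ⟨i₀, hi₀⟩ => ?_⟩
  have hGP : aeval G P ≠ 0 := by
    intro h0
    have hspec := hG (Polynomial.aeval (algebraMap F F[X] (v i₀))) P
    have hL : ∀ j, ∑ i, Polynomial.aeval (algebraMap F F[X] (v i₀)) (L i) * f i j = f i₀ j := by
      intro j
      rw [Finset.sum_eq_single i₀ (fun i _ hi => by
        simp only [L, Polynomial.aeval_algebraMap_apply_eq_algebraMap_eval,
          Lagrange.eval_basis_of_ne hi (Finset.mem_univ _), map_zero, zero_mul]) (by simp)]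
      simp only [L, Polynomial.aeval_algebraMap_apply_eq_algebraMap_eval,
        Lagrange.eval_basis_self v.injective.injOn (Finset.mem_univ _), map_one, one_mul]
    simp only [hL, h0, map_zero] at hspec
    exact hi₀ hspec.symm
  rw [← hG]
  refine Polynomial.eval₂_expand_X_ne_zero hGP (Nat.lt_succ_of_le ?_)
  rw [← MvPolynomial.aeval_map_algebraMap F[X]]
  refine MvPolynomial.aeval_natDegree_le _ ?_ _ fun j => ?_
  · exact (Finset.sup_le fun m hm => le_totalDegree (support_map_subset _ _ hm)).trans hP
  · refine Polynomial.natDegree_sum_le_of_forall_le _ _ fun i _ => ?_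
    refine (Polynomial.natDegree_C_mul_le _ _).trans (Polynomial.natDegree_map_le.trans ?_)
    exact Finset.le_sup (f := fun p : ι × σ => (f p.1 p.2).natDegree) (Finset.mem_univ (i, j))

theorem Matrix.map_mem_span_range_map_coeff {K σ ι ι' : Type*} [CommSemiring K] [Fintype ι]
    [Fintype ι'] (B : Matrix ι ι' (MvPolynomial σ K)) (φ : MvPolynomial σ K →ₗ[K] K) :
    B.map φ ∈ Submodule.span K (Set.range fun a => B.map (coeff a)) := by
  classical
  let S := Finset.univ.biUnion fun q : ι × ι' => (B q.1 q.2).support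
  have hφ : B.map φ = ∑ a ∈ S, φ (monomial a 1) • B.map (coeff a) := by
    ext r c
    have hsub : (B r c).support ⊆ S := fun a ha =>
      Finset.mem_biUnion.2 ⟨(r, c), Finset.mem_univ _, ha⟩
    rw [Matrix.map_apply, Matrix.sum_apply]
    conv_lhs => rw [(B r c).as_sum, Finset.sum_subset hsub fun a _ ha => by
      rw [notMem_support_iff.1 ha, monomial_zero], map_sum]
    refine Finset.sum_congr rfl fun a _ => ?_
    rw [Matrix.smul_apply, Matrix.map_apply, smul_eq_mul, mul_comm, ← smul_eq_mul, ← map_smul,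
      smul_monomial, smul_eq_mul, mul_one]
  rw [hφ]
  exact Submodule.sum_mem _ fun a _ => Submodule.smul_mem _ _ (Submodule.subset_span ⟨a, rfl⟩)

section Shift

variable {F ι ι' : Type*} [Field F] [Fintype ι] [Fintype ι'] {n : ℕ}

theorem shiftBy_eq_aeval_shiftBy (h h' : Fin n → F[X]) (P : MvPolynomial (Fin n) F) :
    shiftBy h' P = aeval (fun j => X j + C (algebraMap F[X] (RatFunc F) (h' j) -
      algebraMap F[X] (RatFunc F) (h j))) (shiftBy h P) := by
  have : ((aeval fun j => X j + C (algebraMap F[X] (RatFunc F) (h' j) -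
      algebraMap F[X] (RatFunc F) (h j)) : MvPolynomial (Fin n) (RatFunc F) →ₐ[RatFunc F] _)
        |>.restrictScalars F).comp (aeval fun j => X j + C (algebraMap F[X] (RatFunc F) (h j))) =
      aeval fun j => X j + C (algebraMap F[X] (RatFunc F) (h' j)) :=
    algHom_ext fun j => by simp [add_assoc]
  exact (AlgHom.congr_fun this P).symm

theorem coeff_shiftBy (h : Fin n → F[X]) (P : MvPolynomial (Fin n) F) (b : Fin n →₀ ℕ) :
    (shiftBy h P).coeff b = aeval (fun j => algebraMap F[X] (RatFunc F) (h j)) (hasseDeriv b P) :=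
  (aeval_hasseDeriv _ b P).symm

theorem shiftBy_coeff_mem_span (A : Matrix ι ι' (MvPolynomial (Fin n) F))
    (h h' : Fin n → F[X]) (b : Fin n →₀ ℕ) :
    (Matrix.of fun r c => (shiftBy h' (A r c)).coeff b) ∈ Submodule.span (RatFunc F)
      (Set.range fun a => Matrix.of fun r c => (shiftBy h (A r c)).coeff a) := by
  simp_rw [shiftBy_eq_aeval_shiftBy h h']
  exact (A.map (shiftBy h)).map_mem_span_range_map_coeff
    ((lcoeff (RatFunc F) b).comp (aeval _).toLinearMap)

theorem linearIndependent_shiftBy_coeff {κ : Type*} [Fintype κ] [DecidableEq κ]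
    (A : Matrix ι ι' (MvPolynomial (Fin n) F)) {D : ℕ} (hA : ∀ r c, (A r c).totalDegree ≤ D)
    (β : κ → Fin n →₀ ℕ) {f₀ g : Fin n → F[X]}
    (hg : ∀ Q : MvPolynomial (Fin n) F, Q.totalDegree ≤ Fintype.card ι * Fintype.card ι' * D →
      aeval f₀ Q ≠ 0 → aeval g Q ≠ 0)
    (h₀ : LinearIndependent (RatFunc F) fun k =>
      Matrix.of fun r c => (shiftBy f₀ (A r c)).coeff (β k)) :
    LinearIndependent (RatFunc F) fun k =>
      Matrix.of fun r c => (shiftBy g (A r c)).coeff (β k) := by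
  let P : κ → ι × ι' → MvPolynomial (Fin n) F := fun k q => hasseDeriv (β k) (A q.1 q.2)
  have hP : ∀ h : Fin n → F[X], (LinearIndependent (RatFunc F) fun k =>
      Matrix.of fun r c => (shiftBy h (A r c)).coeff (β k)) ↔
      LinearIndependent (RatFunc F) fun k q => aeval (algebraMap F[X] (RatFunc F) ∘ h) (P k q) :=
    fun h => by
      simp_rw [coeff_shiftBy]
      exact Matrix.linearIndependent_of_curry_iff fun k q =>
        aeval (algebraMap F[X] (RatFunc F) ∘ h) (P k q)
  obtain ⟨Q, hQdeg, hQ₀, hQ⟩ := ((hP f₀).1 h₀).exists_certificate P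
    fun k q => (totalDegree_hasseDeriv_le _ _).trans (hA _ _)
  have hinj := IsFractionRing.injective F[X] (RatFunc F)
  rw [aeval_algebraMap_apply, ne_eq, map_eq_zero_iff _ hinj] at hQ₀
  refine (hP g).2 (hQ _ ?_)
  rw [aeval_algebraMap_apply, ne_eq, map_eq_zero_iff _ hinj]
  exact hg Q (by simpa [mul_assoc] using hQdeg) hQ₀

theorem Concentrated.shiftBy_of_forall_aeval_ne_zero (A : Matrix ι ι' (MvPolynomial (Fin n) F))
    {D ℓ : ℕ} (hA : ∀ r c, (A r c).totalDegree ≤ D) {f₀ g : Fin n → F[X]}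
    (hg : ∀ Q : MvPolynomial (Fin n) F, Q.totalDegree ≤ Fintype.card ι * Fintype.card ι' * D →
      aeval f₀ Q ≠ 0 → aeval g Q ≠ 0)
    (h₀ : Concentrated (RatFunc F) ℓ fun a => Matrix.of fun r c => (shiftBy f₀ (A r c)).coeff a) :
    Concentrated (RatFunc F) ℓ fun a => Matrix.of fun r c => (shiftBy g (A r c)).coeff a := by
  classical
  obtain ⟨κ, _, β, hβ, hli, hspan⟩ := h₀.exists_linearIndependent
  refine concentrated_of_linearIndependent (fun a => shiftBy_coeff_mem_span A f₀ g a) hβ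
    (linearIndependent_shiftBy_coeff A hA β hg hli) ?_
  rw [← hspan, finrank_span_eq_card hli]

end Shift

theorem IndivDegLE.totalDegree_le {F : Type*} [Field F] {n d : ℕ} {P : MvPolynomial (Fin n) F}
    (hP : IndivDegLE d P) : P.totalDegree ≤ n * d :=
  Finset.sup_le fun m hm => by
    simpa [Finsupp.sum_fintype] using Finset.sum_le_sum fun i (_ : i ∈ Finset.univ) => hP m hm i

theorem single_shift_from_family_general
    {F : Type*} [Field F] [Infinite F] {n d w ℓ N : ℕ}
    (f : Fin N → Fin n → Polynomial F)
    (hf : ∀ A : Matrix (Fin w) (Fin w) (MvPolynomial (Fin n) F),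
      (∀ r c, IndivDegLE d (A r c)) → (∃ π : Equiv.Perm (Fin n), IsMatROABP w π A) →
      ∃ i, Concentrated (RatFunc F) ℓ
        (fun a => Matrix.of fun r c => (shiftBy (f i) (A r c)).coeff a)) :
    ∃ g : Fin n → Polynomial F,
      ∀ A : Matrix (Fin w) (Fin w) (MvPolynomial (Fin n) F),
        (∀ r c, IndivDegLE d (A r c)) → (∃ π : Equiv.Perm (Fin n), IsMatROABP w π A) →
        Concentrated (RatFunc F) ℓ
          (fun a => Matrix.of fun r c => (shiftBy g (A r c)).coeff a) := by
  obtain ⟨g, hg⟩ := exists_forall_aeval_ne_zero_of_exists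
    (Fintype.card (Fin w) * Fintype.card (Fin w) * (n * d)) f
  refine ⟨g, fun A hdeg hroabp => ?_⟩
  obtain ⟨i, hi⟩ := hf A hdeg hroabp
  exact hi.shiftBy_of_forall_aeval_ne_zero A (fun r c => (hdeg r c).totalDegree_le)
    fun Q hQ hQi => hg Q hQ ⟨i, hQi⟩

/-- Theorem 5.6 of the paper: from any finite family of shifts such that
every width-`w` matrix polynomial ROABP of individual degree ≤ d is `ℓ`-concentrated by some
member of the family, one can obtain a single shift `g(t)` that `ℓ`-concentrates all of them
simultaneously. -/
theorem single_shift_from_family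
    {F : Type*} [Field F] [Infinite F] {n d w ℓ N : ℕ}
    (hn : 1 ≤ n) (hd : 1 ≤ d) (hw : 1 ≤ w) (hl : 1 ≤ ℓ)
    (f : Fin N → Fin n → Polynomial F)
    (hf : ∀ A : Matrix (Fin w) (Fin w) (MvPolynomial (Fin n) F),
      (∀ r c, IndivDegLE d (A r c)) → (∃ π : Equiv.Perm (Fin n), IsMatROABP w π A) →
      ∃ i, Concentrated (RatFunc F) ℓ
        (fun a => Matrix.of fun r c => (shiftBy (f i) (A r c)).coeff a)) :
    ∃ g : Fin n → Polynomial F,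
      ∀ A : Matrix (Fin w) (Fin w) (MvPolynomial (Fin n) F),
        (∀ r c, IndivDegLE d (A r c)) → (∃ π : Equiv.Perm (Fin n), IsMatROABP w π A) →
        Concentrated (RatFunc F) ℓ
          (fun a => Matrix.of fun r c => (shiftBy g (A r c)).coeff a) :=
  single_shift_from_family_general f hf
end
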